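/- arXiv:2007.02636 — 7 statements merged into one kernel-verified Lean document; each statement's English description precedes it below -/
import Mathlib

section
/- Let G be a finite group, F an arbitrary field of characteristic 2, and V a nontrivial irreducible FG-module that is self-dual (V ≅ V* as FG-modules). Then V affords a non-degenerate G-invariant alternating bilinear form. -/
open Module

section Defs
variable {F : Type} [Field F] {G : Type} [Group G]
variable {V W : Type} [AddCommGroup V] [Module F V] [AddCommGroup W] [Module F W]

def IsSubrep (ρ : Representation F G V) (U : Submodule F V) : Prop :=
  ∀ (g : G), ∀ v ∈ U, ρ g v ∈ U

def IsIrred (ρ : Representation F G V) : Prop :=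
  Nontrivial V ∧ ∀ U : Submodule F V, IsSubrep ρ U → U = ⊥ ∨ U = ⊤

def RepIso (ρ : Representation F G V) (σ : Representation F G W) : Prop :=
  ∃ e : V ≃ₗ[F] W, ∀ (g : G) (v : V), e (ρ g v) = σ g (e v)

def IsSelfDual (ρ : Representation F G V) : Prop :=
  RepIso ρ ρ.dual

def IsTrivialRep (ρ : Representation F G V) : Prop := ∀ (g : G) (v : V), ρ g v = v

def EquivHom (σ : Representation F G W) (ρ : Representation F G V) :
    Submodule F (W →ₗ[F] V) where
  carrier := {f | ∀ (g : G) (w : W), f (σ g w) = ρ g (f w)}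
  add_mem' := by
    intro f f' hf hf' g w
    simp [LinearMap.add_apply, hf g w, hf' g w]
  zero_mem' := by intro g w; simp
  smul_mem' := by
    intro c f hf g w
    simp [LinearMap.smul_apply, hf g w]

noncomputable def repMult (σ : Representation F G W) (ρ : Representation F G V) : ℕ :=
  Module.finrank F (EquivHom σ ρ)

def BilinInvariant (ρ : Representation F G V) (B : V →ₗ[F] V →ₗ[F] F) : Prop :=
  ∀ (g : G) (v w : V), B (ρ g v) (ρ g w) = B v w

def Nondeg (B : V →ₗ[F] V →ₗ[F] F) : Prop := ∀ v : V, (∀ w : V, B v w = 0) → v = 0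

def IsAltForm (B : V →ₗ[F] V →ₗ[F] F) : Prop := ∀ v : V, B v v = 0

def PolarizesTo (Q : V → F) (B : V →ₗ[F] V →ₗ[F] F) : Prop :=
  (∀ (a : F) (v : V), Q (a • v) = a ^ 2 * Q v) ∧
    ∀ v w : V, Q (v + w) = Q v + B v w + Q w

def QuadInvariant (ρ : Representation F G V) (Q : V → F) : Prop :=
  ∀ (g : G) (v : V), Q (ρ g v) = Q v

def HasQuadType (ρ : Representation F G V) : Prop :=
  ∃ (Q : V → F) (B : V →ₗ[F] V →ₗ[F] F),
    PolarizesTo Q B ∧ QuadInvariant ρ Q ∧ Nondeg B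

def IsSplitting (F G : Type) [Field F] [Group G] : Prop :=
  ∀ (V : Type) [AddCommGroup V] [Module F V] (ρ : Representation F G V),
    FiniteDimensional F V → IsIrred ρ →
      ∀ f ∈ EquivHom ρ ρ, ∃ c : F, f = c • (LinearMap.id : V →ₗ[F] V)

structure RepOn (F G : Type) [Field F] [Group G] where
  carrier : Type
  [ag : AddCommGroup carrier]
  [md : Module F carrier]
  rep : Representation F G carrier

attribute [instance] RepOn.ag RepOn.md

end Defs

/-!
Self-duality gives an invariant non-degenerate form `B`. If `B` is not
symmetric, then `B + Bᵀ` is a nonzero invariant form, alternating in characteristic 2, and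
non-degenerate because its radical is a proper submodule. If `B` is symmetric, then in
characteristic 2 the isotropic vectors of `B` form a submodule, which contains every `g • v - v`;
by irreducibility and nontriviality it is all of `V`, so `B` itself is alternating.
-/

section BilinearForms
variable {F G V : Type} [Field F] [Group G] [AddCommGroup V] [Module F V]
  {ρ : Representation F G V} {B : V →ₗ[F] V →ₗ[F] F}

lemma bilinInvariant_of_dual_intertwining (f : V →ₗ[F] Module.Dual F V)
    (hf : ∀ (g : G) (v : V), f (ρ g v) = ρ.dual g (f v)) : BilinInvariant ρ f := by
  intro g v w
  rw [hf]
  exact congrArg (f v) (ρ.inv_self_apply g w)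

lemma nondeg_of_injective (hB : Function.Injective B) : Nondeg B :=
  fun v hv => hB (by ext w; simpa using hv w)

lemma BilinInvariant.add_flip (hB : BilinInvariant ρ B) : BilinInvariant ρ (B + B.flip) := by
  intro g v w
  simp [hB g v w, hB g w v]

lemma BilinInvariant.isSubrep_ker (hB : BilinInvariant ρ B) : IsSubrep ρ (LinearMap.ker B) := by
  intro g v hv
  rw [LinearMap.mem_ker] at hv ⊢
  ext w
  simpa [hv] using hB g v (ρ g⁻¹ w)

lemma IsIrred.nondeg_of_ne_zero (hirr : IsIrred ρ) (hB : BilinInvariant ρ B) (hne : B ≠ 0) :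
    Nondeg B := by
  intro v hv
  rcases hirr.2 _ hB.isSubrep_ker with hker | hker
  · have hv' : v ∈ LinearMap.ker B := LinearMap.mem_ker.mpr (LinearMap.ext hv)
    simpa [hker] using hv'
  · exact absurd (LinearMap.ker_eq_top.mp hker) hne

end BilinearForms

section CharTwo
variable {F G V : Type} [Field F] [CharP F 2] [Group G] [AddCommGroup V] [Module F V]
  {ρ : Representation F G V}

lemma isAltForm_add_flip (B : V →ₗ[F] V →ₗ[F] F) : IsAltForm (B + B.flip) :=
  fun v => CharTwo.add_self_eq_zero (B v v)

lemma add_flip_ne_zero {B : V →ₗ[F] V →ₗ[F] F} (hB : B.flip ≠ B) : B + B.flip ≠ 0 := by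
  intro h
  refine hB (LinearMap.ext₂ fun v w => ?_)
  have hvw : B v w + B w v = 0 := LinearMap.congr_fun₂ h v w
  rw [LinearMap.flip_apply]
  linear_combination hvw - CharTwo.add_self_eq_zero (B v w)

/-- For symmetric `B` in characteristic 2, `B (v + w) (v + w) = B v v + B w w`. -/
def isotropicSubmodule (B : V →ₗ[F] V →ₗ[F] F) (hB : B.flip = B) : Submodule F V where
  carrier := {v | B v v = 0}
  add_mem' := by
    intro v w hv hw
    have hwv : B w v = B v w := LinearMap.congr_fun₂ hB v w
    simp_all [CharTwo.add_self_eq_zero]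
  zero_mem' := by simp
  smul_mem' := by
    intro c v hv
    simp_all

lemma mem_isotropicSubmodule {B : V →ₗ[F] V →ₗ[F] F} {hB : B.flip = B} {v : V} :
    v ∈ isotropicSubmodule B hB ↔ B v v = 0 :=
  Iff.rfl

variable {B : V →ₗ[F] V →ₗ[F] F}

lemma BilinInvariant.isSubrep_isotropicSubmodule (hinv : BilinInvariant ρ B) (hB : B.flip = B) :
    IsSubrep ρ (isotropicSubmodule B hB) :=
  fun g v hv => (hinv g v v).trans hv

lemma BilinInvariant.sub_mem_isotropicSubmodule (hinv : BilinInvariant ρ B) (hB : B.flip = B)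
    (g : G) (v : V) : ρ g v - v ∈ isotropicSubmodule B hB := by
  have hsymm : B v (ρ g v) = B (ρ g v) v := LinearMap.congr_fun₂ hB (ρ g v) v
  rw [mem_isotropicSubmodule]
  simp only [map_sub, LinearMap.sub_apply, hinv g v v, hsymm]
  linear_combination CharTwo.add_self_eq_zero (B v v) - CharTwo.add_self_eq_zero (B (ρ g v) v)

lemma IsIrred.isAltForm_of_flip_eq (hirr : IsIrred ρ) (hnt : ¬ IsTrivialRep ρ)
    (hinv : BilinInvariant ρ B) (hB : B.flip = B) : IsAltForm B := by
  rcases hirr.2 _ (hinv.isSubrep_isotropicSubmodule hB) with hbot | htop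
  · refine absurd (fun g v => ?_) hnt
    simpa [hbot, sub_eq_zero] using hinv.sub_mem_isotropicSubmodule hB g v
  · exact fun v => mem_isotropicSubmodule.mp (htop ▸ Submodule.mem_top)

end CharTwo

theorem stmt_0_general {F : Type} [Field F] [CharP F 2] {G : Type} [Group G]
    {V : Type} [AddCommGroup V] [Module F V]
    (ρ : Representation F G V) (hirr : IsIrred ρ) (hnt : ¬ IsTrivialRep ρ)
    (hsd : IsSelfDual ρ) :
    ∃ B : V →ₗ[F] V →ₗ[F] F, BilinInvariant ρ B ∧ Nondeg B ∧ IsAltForm B := by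
  obtain ⟨e, he⟩ := hsd
  set B : V →ₗ[F] V →ₗ[F] F := (e : V →ₗ[F] Dual F V)
  have hinv : BilinInvariant ρ B := bilinInvariant_of_dual_intertwining B he
  by_cases hB : B.flip = B
  · exact ⟨B, hinv, nondeg_of_injective e.injective, hirr.isAltForm_of_flip_eq hnt hinv hB⟩
  · exact ⟨B + B.flip, hinv.add_flip, hirr.nondeg_of_ne_zero hinv.add_flip (add_flip_ne_zero hB),
      isAltForm_add_flip B⟩

/-- Fong's Lemma: a nontrivial self-dual irreducible module over a field of
characteristic 2 affords a non-degenerate invariant alternating bilinear form. -/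
theorem stmt_0 {F : Type} [Field F] [CharP F 2] {G : Type} [Group G] [Finite G]
    {V : Type} [AddCommGroup V] [Module F V] [FiniteDimensional F V]
    (ρ : Representation F G V) (hirr : IsIrred ρ) (hnt : ¬ IsTrivialRep ρ)
    (hsd : IsSelfDual ρ) :
    ∃ B : V →ₗ[F] V →ₗ[F] F, BilinInvariant ρ B ∧ Nondeg B ∧ IsAltForm B :=
  stmt_0_general ρ hirr hnt hsd
end

section
/- Let G be a finite group, F a field of characteristic 2, and V an FG-module affording a non-degenerate G-invariant alternating bilinear form B. Suppose V has no nonzero trivial quotient module. Then V affords at most one G-invariant quadratic form which polarizes to B. -/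
open Module

/-! Two quadratic forms with the same polarization differ by an additive function `D` with
`D (a • v) = a ^ 2 * D v`, so they agree on a subspace. If both forms are `G`-invariant, this
subspace is `G`-stable and contains every `g v - v`, i.e. it has trivial quotient. -/

section EqLocus
variable {F : Type} [Field F] {G : Type} [Group G] {V : Type} [AddCommGroup V] [Module F V]
  {B : V →ₗ[F] V →ₗ[F] F} {Q₁ Q₂ : V → F}

theorem PolarizesTo.map_zero {Q : V → F} (hQ : PolarizesTo Q B) : Q 0 = 0 := by
  simpa using hQ.1 0 0

def PolarizesTo.eqLocus (h₁ : PolarizesTo Q₁ B) (h₂ : PolarizesTo Q₂ B) : Submodule F V where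
  carrier := {v | Q₁ v = Q₂ v}
  add_mem' {v w} hv hw := by
    change Q₁ (v + w) = Q₂ (v + w)
    rw [h₁.2, h₂.2, hv, hw]
  zero_mem' := h₁.map_zero.trans h₂.map_zero.symm
  smul_mem' a v hv := by
    change Q₁ (a • v) = Q₂ (a • v)
    rw [h₁.1, h₂.1, hv]

theorem PolarizesTo.mem_eqLocus (h₁ : PolarizesTo Q₁ B) (h₂ : PolarizesTo Q₂ B) {v : V} :
    v ∈ h₁.eqLocus h₂ ↔ Q₁ v = Q₂ v :=
  Iff.rfl

theorem PolarizesTo.isSubrep_eqLocus (h₁ : PolarizesTo Q₁ B) (h₂ : PolarizesTo Q₂ B)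
    {ρ : Representation F G V} (hi₁ : QuadInvariant ρ Q₁) (hi₂ : QuadInvariant ρ Q₂) :
    IsSubrep ρ (h₁.eqLocus h₂) := by
  intro g v hv
  rw [h₁.mem_eqLocus] at hv ⊢
  rw [hi₁, hi₂, hv]

theorem PolarizesTo.sub_mem_eqLocus (h₁ : PolarizesTo Q₁ B) (h₂ : PolarizesTo Q₂ B)
    {ρ : Representation F G V} (hi₁ : QuadInvariant ρ Q₁) (hi₂ : QuadInvariant ρ Q₂)
    (g : G) (v : V) :
    ρ g v - v ∈ h₁.eqLocus h₂ := by
  have e₁ := h₁.2 (ρ g v - v) v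
  have e₂ := h₂.2 (ρ g v - v) v
  rw [sub_add_cancel, hi₁] at e₁
  rw [sub_add_cancel, hi₂] at e₂
  rw [h₁.mem_eqLocus]
  linear_combination e₂ - e₁

end EqLocus

theorem stmt_4_general {F : Type} [Field F] {G : Type} [Group G]
    {V : Type} [AddCommGroup V] [Module F V]
    (ρ : Representation F G V) (B : V →ₗ[F] V →ₗ[F] F)
    (hnoquot : ∀ U : Submodule F V, IsSubrep ρ U →
      (∀ (g : G) (v : V), ρ g v - v ∈ U) → U = ⊤)
    (Q₁ Q₂ : V → F)
    (h₁ : PolarizesTo Q₁ B) (hi₁ : QuadInvariant ρ Q₁)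
    (h₂ : PolarizesTo Q₂ B) (hi₂ : QuadInvariant ρ Q₂) :
    Q₁ = Q₂ := by
  have htop : h₁.eqLocus h₂ = ⊤ :=
    hnoquot _ (h₁.isSubrep_eqLocus h₂ hi₁ hi₂) (h₁.sub_mem_eqLocus h₂ hi₁ hi₂)
  funext v
  exact (h₁.mem_eqLocus h₂).mp (Submodule.eq_top_iff'.mp htop v)

/-- if V has no nonzero trivial quotient, a G-invariant quadratic form polarizing
to a given non-degenerate invariant alternating form B is unique. -/
theorem stmt_4 {F : Type} [Field F] [CharP F 2] {G : Type} [Group G] [Finite G]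
    {V : Type} [AddCommGroup V] [Module F V]
    (ρ : Representation F G V) (B : V →ₗ[F] V →ₗ[F] F)
    (hBinv : BilinInvariant ρ B) (hBnd : Nondeg B) (hBalt : IsAltForm B)
    (hnoquot : ∀ U : Submodule F V, IsSubrep ρ U →
      (∀ (g : G) (v : V), ρ g v - v ∈ U) → U = ⊤)
    (Q₁ Q₂ : V → F)
    (h₁ : PolarizesTo Q₁ B) (hi₁ : QuadInvariant ρ Q₁)
    (h₂ : PolarizesTo Q₂ B) (hi₂ : QuadInvariant ρ Q₂) :
    Q₁ = Q₂ :=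
  stmt_4_general ρ B hnoquot Q₁ Q₂ h₁ hi₁ h₂ hi₂
end

section
/- Let G be a finite group, F a field of characteristic 2, and let U, V be FG-modules affording non-degenerate G-invariant alternating bilinear forms B_U and B_V respectively. Then there exists a unique quadratic form Q on U ⊗_F V that polarizes to the form B_U ⊗ B_V and satisfies Q(u ⊗ v) = 0 for all u ∈ U, v ∈ V; moreover this Q is G-invariant. -/
open Module

/-!
In characteristic 2 an alternating form `B_U` equals `S + Sᵀ`, where `S` is its strictly upper
triangular half with respect to a well-ordered basis. Then `Q x = (S ⊗ B_V) x x` polarizes to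
`(S + Sᵀ) ⊗ B_V = B_U ⊗ B_V` (as `B_V` is symmetric) and vanishes on `u ⊗ v` because
`B_V v v = 0`. Two functions polarizing to the same form differ by an additive function, so if they
agree on pure tensors they agree everywhere. Invariance follows from uniqueness: `Q ∘ g` is another
such function.
-/

open TensorProduct

section UpperHalf

variable {R M N ι : Type*} [CommRing R] [AddCommGroup M] [Module R M] [AddCommGroup N]
  [Module R N] [LinearOrder ι]

noncomputable def Module.Basis.upperHalf (b : Basis ι R M) (B : LinearMap.BilinMap R M N) :
    LinearMap.BilinMap R M N :=
  b.constr R fun i => b.constr R fun j => if i < j then B (b i) (b j) else 0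

theorem Module.Basis.upperHalf_apply_basis (b : Basis ι R M) (B : LinearMap.BilinMap R M N)
    (i j : ι) : b.upperHalf B (b i) (b j) = if i < j then B (b i) (b j) else 0 := by
  simp only [upperHalf, Basis.constr_basis]

theorem Module.Basis.upperHalf_add_flip (b : Basis ι R M) {B : LinearMap.BilinMap R M N}
    (hsymm : ∀ x y, B x y = B y x) (halt : B.IsAlt) :
    b.upperHalf B + (b.upperHalf B).flip = B := by
  refine b.ext fun i => b.ext fun j => ?_
  simp only [LinearMap.add_apply, LinearMap.flip_apply, upperHalf_apply_basis]
  rcases lt_trichotomy i j with h | rfl | h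
  · simp [h, h.not_gt]
  · simp [halt.self_eq_zero]
  · simp [h, h.not_gt, hsymm (b i)]

end UpperHalf

namespace LinearMap.BilinForm

variable {R M : Type*} [CommRing R] [AddCommGroup M] [Module R M]

theorem IsAlt.apply_comm_of_charTwo [CharP R 2] {B : LinearMap.BilinForm R M} (hB : B.IsAlt)
    (x y : M) : B x y = B y x := by
  rw [← hB.neg_eq x y, CharTwo.neg_eq]

theorem IsAlt.exists_add_flip_eq [CharP R 2] [Module.Free R M] {B : LinearMap.BilinForm R M}
    (hB : B.IsAlt) : ∃ S : LinearMap.BilinForm R M, S + S.flip = B := by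
  let _ : LinearOrder (Module.Free.ChooseBasisIndex R M) :=
    IsWellOrder.linearOrder WellOrderingRel
  exact ⟨_, (Module.Free.chooseBasis R M).upperHalf_add_flip hB.apply_comm_of_charTwo hB⟩

theorem tmul_add_flip_tmul {N : Type*} [AddCommGroup N] [Module R N]
    (S : LinearMap.BilinForm R M) {B : LinearMap.BilinForm R N} (hB : ∀ y y', B y y' = B y' y) :
    S.tmul B + (S.tmul B).flip = (S + S.flip).tmul B :=
  ext' fun x y => ext' fun x' y' => by simp [hB y' y, mul_add]

end LinearMap.BilinForm

section Polarization

variable {F W : Type} [Field F] [AddCommGroup W] [Module F W]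

theorem polarizesTo_add_flip (S : W →ₗ[F] W →ₗ[F] F) :
    PolarizesTo (fun x => S x x) (S + S.flip) :=
  ⟨fun a x => by simp only [map_smul, LinearMap.smul_apply, smul_eq_mul]; ring,
    fun x y => by simp only [map_add, LinearMap.add_apply, LinearMap.flip_apply]; ring⟩

theorem PolarizesTo.comp {Q : W → F} {T : W →ₗ[F] W →ₗ[F] F} (hQ : PolarizesTo Q T)
    (f : W →ₗ[F] W) (hf : ∀ x y, T (f x) (f y) = T x y) : PolarizesTo (Q ∘ f) T :=
  ⟨fun a x => by simp only [Function.comp_apply, map_smul, hQ.1],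
    fun x y => by simp only [Function.comp_apply, map_add, hQ.2, hf]⟩

theorem PolarizesTo.eq_of_tmul {U V : Type} [AddCommGroup U] [Module F U] [AddCommGroup V]
    [Module F V] {Q Q' : U ⊗[F] V → F} {T : (U ⊗[F] V) →ₗ[F] (U ⊗[F] V) →ₗ[F] F}
    (hQ : PolarizesTo Q T) (hQ' : PolarizesTo Q' T) (h : ∀ u v, Q (u ⊗ₜ v) = Q' (u ⊗ₜ v)) :
    Q = Q' := by
  funext x
  induction x using TensorProduct.induction_on with
  | zero => simpa using h 0 0
  | tmul u v => exact h u v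
  | add x y hx hy => rw [hQ.2, hQ'.2, hx, hy]

end Polarization

open TensorProduct in
theorem stmt_5_general {F : Type} [Field F] [CharP F 2] {G : Type} [Group G]
    {U V : Type} [AddCommGroup U] [Module F U] [AddCommGroup V] [Module F V]
    (ρU : Representation F G U) (ρV : Representation F G V)
    (BU : U →ₗ[F] U →ₗ[F] F) (BV : V →ₗ[F] V →ₗ[F] F)
    (hBU : BilinInvariant ρU BU ∧ Nondeg BU ∧ IsAltForm BU)
    (hBV : BilinInvariant ρV BV ∧ Nondeg BV ∧ IsAltForm BV)
    (T : (U ⊗[F] V) →ₗ[F] (U ⊗[F] V) →ₗ[F] F)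
    (hT : ∀ (u u' : U) (v v' : V), T (u ⊗ₜ[F] v) (u' ⊗ₜ[F] v') = BU u u' * BV v v') :
    ∃ Q : U ⊗[F] V → F,
      (PolarizesTo Q T ∧ (∀ (u : U) (v : V), Q (u ⊗ₜ[F] v) = 0) ∧
        QuadInvariant (ρU.tprod ρV) Q) ∧
      ∀ Q' : U ⊗[F] V → F,
        PolarizesTo Q' T → (∀ (u : U) (v : V), Q' (u ⊗ₜ[F] v) = 0) → Q' = Q := by
  obtain ⟨hUinv, -, hUalt⟩ := hBU
  obtain ⟨hVinv, -, hValt⟩ := hBV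
  obtain ⟨S, hS⟩ := LinearMap.BilinForm.IsAlt.exists_add_flip_eq (B := BU) hUalt
  have hT_eq : T = S.tmul BV + (S.tmul BV).flip := by
    rw [S.tmul_add_flip_tmul (LinearMap.BilinForm.IsAlt.apply_comm_of_charTwo hValt), hS]
    exact ext' fun u v => ext' fun u' v' => by simp [hT, mul_comm]
  set Q : U ⊗[F] V → F := fun x => S.tmul BV x x
  have hpol : PolarizesTo Q T := hT_eq ▸ polarizesTo_add_flip _
  have hpure (u : U) (v : V) : Q (u ⊗ₜ v) = 0 := by simp [Q, hValt v]
  have huniq (Q' : U ⊗[F] V → F) (hQ' : PolarizesTo Q' T) (h0 : ∀ u v, Q' (u ⊗ₜ[F] v) = 0) :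
      Q' = Q :=
    hQ'.eq_of_tmul hpol fun u v => by rw [h0, hpure]
  have hTinv (g : G) (x y : U ⊗[F] V) : T (ρU.tprod ρV g x) (ρU.tprod ρV g y) = T x y := by
    refine LinearMap.congr_fun₂ (ext' fun u v => ext' fun u' v' => ?_ :
      T.compl₁₂ (ρU.tprod ρV g) (ρU.tprod ρV g) = T) x y
    simp only [LinearMap.compl₁₂_apply, Representation.tprod_apply, map_tmul, hT, hUinv g, hVinv g]
  refine ⟨Q, ⟨hpol, hpure, fun g => congrFun (huniq _ (hpol.comp _ (hTinv g)) fun u v => ?_)⟩,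
    huniq⟩
  simp only [Representation.tprod_apply, map_tmul, hpure]

open TensorProduct in
/-- Sin–Willems: there is a unique quadratic form on U ⊗ V polarizing to
B_U ⊗ B_V and vanishing on pure tensors; moreover it is G-invariant. -/
theorem stmt_5 {F : Type} [Field F] [CharP F 2] {G : Type} [Group G] [Finite G]
    {U V : Type} [AddCommGroup U] [Module F U] [AddCommGroup V] [Module F V]
    (ρU : Representation F G U) (ρV : Representation F G V)
    (BU : U →ₗ[F] U →ₗ[F] F) (BV : V →ₗ[F] V →ₗ[F] F)
    (hBU : BilinInvariant ρU BU ∧ Nondeg BU ∧ IsAltForm BU)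
    (hBV : BilinInvariant ρV BV ∧ Nondeg BV ∧ IsAltForm BV)
    (T : (U ⊗[F] V) →ₗ[F] (U ⊗[F] V) →ₗ[F] F)
    (hT : ∀ (u u' : U) (v v' : V), T (u ⊗ₜ[F] v) (u' ⊗ₜ[F] v') = BU u u' * BV v v') :
    ∃ Q : U ⊗[F] V → F,
      (PolarizesTo Q T ∧ (∀ (u : U) (v : V), Q (u ⊗ₜ[F] v) = 0) ∧
        QuadInvariant (ρU.tprod ρV) Q) ∧
      ∀ Q' : U ⊗[F] V → F,
        PolarizesTo Q' T → (∀ (u : U) (v : V), Q' (u ⊗ₜ[F] v) = 0) → Q' = Q :=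
  stmt_5_general ρU ρV BU BV hBU hBV T hT
end

section
/- Let G be a finite group, N a normal subgroup, F a perfect splitting field of characteristic 2, W a self-dual irreducible FN-module, and V a self-dual irreducible FG-module. If the multiplicity e of W as a composition factor of V↓_N satisfies e > 1, then e is even. -/
open Module

/-!
Self-duality gives invariant forms `B` on `V` and `eW` on `W`; by the splitting hypothesis they
are unique up to scalars, hence symmetric in characteristic 2. On the multiplicity space
`E = Hom_N(W, V)` this defines a symmetric form `Λ` by `B (f w) (f' w') = Λ f f' * eW w w'`, and
`Λ` is nondegenerate because `V` is a sum of irreducible `N`-submodules (Clifford). If `Λ` is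
alternating, `e = dim E` is even. Otherwise, `F` being perfect of characteristic 2, the isotropic
vectors of `Λ` form a hyperplane `K`, nonzero as `e > 1`. The `G`-translates of the images of `K`
span `V`, and Schur's lemma makes them all orthogonal to `f W` whenever `f ⊥ K`; so such an `f`
vanishes, against nondegeneracy.
-/

namespace LinearMap.BilinForm

variable {K V : Type*} [Field K] [AddCommGroup V] [Module K V]

theorem IsAlt.disjoint_span_pair_orthogonal {B : LinearMap.BilinForm K V} (hA : B.IsAlt)
    {x y : V} (hxy : B x y ≠ 0) :
    Disjoint (Submodule.span K {x, y}) (B.orthogonal (Submodule.span K {x, y})) := by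
  rw [Submodule.disjoint_def]
  intro p hp hperp
  obtain ⟨a, b, rfl⟩ := Submodule.mem_span_pair.mp hp
  have hx := hperp x (Submodule.subset_span (by simp))
  have hy := hperp y (Submodule.subset_span (by simp))
  simp only [map_add, map_smul, smul_eq_mul, hA x, hA y, mul_zero, zero_add, add_zero] at hx hy
  have hyx : B y x ≠ 0 := fun h => hxy (hA.eq_iff.mp h)
  simp [(mul_eq_zero.mp hx).resolve_right hxy, (mul_eq_zero.mp hy).resolve_right hyx]

theorem IsAlt.finrank_span_pair {B : LinearMap.BilinForm K V} (hA : B.IsAlt) {x y : V}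
    (hxy : B x y ≠ 0) : finrank K (Submodule.span K {x, y}) = 2 := by
  have hx : x ≠ 0 := by rintro rfl; simp at hxy
  have hli : LinearIndependent K ![x, y] := by
    refine (LinearIndependent.pair_iff' hx).mpr fun a hax => hxy ?_
    simp [← hax, hA x]
  rw [← Matrix.range_cons_cons_empty x y ![], finrank_span_eq_card hli, Fintype.card_fin]

theorem even_finrank_of_isAlt [FiniteDimensional K V] {B : LinearMap.BilinForm K V}
    (hB : B.Nondegenerate) (hA : B.IsAlt) : Even (finrank K V) := by
  induction hn : finrank K V using Nat.strong_induction_on generalizing V with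
  | _ n ih =>
  rcases Nat.eq_zero_or_pos n with rfl | hpos
  · exact ⟨0, rfl⟩
  have : Nontrivial V := Module.nontrivial_of_finrank_pos (hn ▸ hpos)
  obtain ⟨x, hx⟩ := exists_ne (0 : V)
  obtain ⟨y, hxy⟩ : ∃ y, B x y ≠ 0 := by
    by_contra! h
    exact hx (hB.1 x h)
  set P := Submodule.span K {x, y}
  have hrefl := hA.isRefl
  have hcompl : IsCompl P (B.orthogonal P) :=
    (isCompl_orthogonal_iff_disjoint hrefl).mpr (hA.disjoint_span_pair_orthogonal hxy)
  have hQ : (B.restrict (B.orthogonal P)).Nondegenerate := by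
    rw [restrict_nondegenerate_iff_isCompl_orthogonal hrefl, orthogonal_orthogonal hB hrefl]
    exact hcompl.symm
  have hdim := Submodule.finrank_add_eq_of_isCompl hcompl
  rw [hA.finrank_span_pair hxy] at hdim
  obtain ⟨m, hm⟩ := ih _ (by omega) hQ (fun z => hA z) rfl
  exact ⟨m + 1, by omega⟩

section CharTwo

variable {F E : Type*} [Field F] [CharP F 2] [AddCommGroup E] [Module F E]

/-- In characteristic 2 the diagonal `x ↦ B x x` of a symmetric form is additive and
`a ↦ a ^ 2`-semilinear, so its zero set is a subspace. -/
def isotropicSubspace (B : LinearMap.BilinForm F E) (hB : B.IsSymm) : Submodule F E where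
  carrier := {x | B x x = 0}
  add_mem' {x y} (hx : B x x = 0) (hy : B y y = 0) := by
    have h2 : (2 : F) = 0 := CharP.cast_eq_zero F 2
    change B (x + y) (x + y) = 0
    simp only [map_add, LinearMap.add_apply, hx, hy, hB.eq y x]
    linear_combination B x y * h2
  zero_mem' := by simp
  smul_mem' a x hx := by simp_all

theorem mem_isotropicSubspace {B : LinearMap.BilinForm F E} {hB : B.IsSymm} {x : E} :
    x ∈ isotropicSubspace B hB ↔ B x x = 0 := Iff.rfl

theorem finrank_le_finrank_isotropicSubspace_add_one [PerfectField F] [FiniteDimensional F E]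
    {B : LinearMap.BilinForm F E} (hB : B.IsSymm) {x₀ : E} (hx₀ : B x₀ x₀ ≠ 0) :
    finrank F E ≤ finrank F (isotropicSubspace B hB) + 1 := by
  have h2 : (2 : F) = 0 := CharP.cast_eq_zero F 2
  have hsup : isotropicSubspace B hB ⊔ F ∙ x₀ = ⊤ := by
    refine Submodule.eq_top_iff'.mpr fun x => ?_
    obtain ⟨s, hs⟩ := surjective_frobenius F 2 (B x x / B x₀ x₀)
    rw [_root_.frobenius_def] at hs
    have hiso : x - s • x₀ ∈ isotropicSubspace B hB := by
      rw [mem_isotropicSubspace]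
      simp only [map_sub, map_smul, LinearMap.sub_apply, LinearMap.smul_apply, smul_eq_mul,
        hB.eq x₀ x]
      field_simp at hs
      linear_combination (-s * B x x₀ + B x x) * h2 + hs
    have hspan : s • x₀ ∈ F ∙ x₀ := Submodule.mem_span_singleton.mpr ⟨s, rfl⟩
    simpa using Submodule.add_mem_sup hiso hspan
  calc finrank F E = finrank F (⊤ : Submodule F E) := (_root_.finrank_top ..).symm
    _ ≤ finrank F (isotropicSubspace B hB) + finrank F (F ∙ x₀) :=
        hsup ▸ Submodule.finrank_add_le_finrank_add_finrank _ _
    _ ≤ finrank F (isotropicSubspace B hB) + 1 := by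
        rw [finrank_span_singleton (ne_zero_of_not_isOrtho_self x₀ hx₀)]

theorem isotropicSubspace_ne_bot [PerfectField F] [FiniteDimensional F E]
    {B : LinearMap.BilinForm F E} (hB : B.IsSymm) (hE : 1 < finrank F E) :
    isotropicSubspace B hB ≠ ⊥ := by
  intro hbot
  by_cases hA : B.IsAlt
  · have : Nontrivial E := Module.nontrivial_of_finrank_pos (zero_lt_one.trans hE)
    exact top_ne_bot (eq_top_iff.mpr (fun x _ => hA x) |>.symm.trans hbot)
  · obtain ⟨x₀, hx₀⟩ := not_forall.mp hA
    have := finrank_le_finrank_isotropicSubspace_add_one hB hx₀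
    rw [hbot, finrank_bot] at this
    omega

theorem orthogonal_isotropicSubspace_ne_bot [FiniteDimensional F E]
    {B : LinearMap.BilinForm F E} (hB : B.IsSymm) (hBn : B.Nondegenerate) (hA : ¬B.IsAlt) :
    B.orthogonal (isotropicSubspace B hB) ≠ ⊥ := by
  obtain ⟨x₀, hx₀⟩ := not_forall.mp hA
  have hlt := Submodule.finrank_lt (s := isotropicSubspace B hB) fun htop =>
    hx₀ (mem_isotropicSubspace.mp (htop ▸ Submodule.mem_top))
  rw [Ne, ← Submodule.finrank_eq_zero, finrank_orthogonal hBn]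
  omega

end CharTwo

end LinearMap.BilinForm

section Intertwiners

variable {F : Type} [Field F] {G : Type} [Group G]
variable {X Y Z : Type} [AddCommGroup X] [Module F X] [AddCommGroup Y] [Module F Y]
  [AddCommGroup Z] [Module F Z]
variable {τ : Representation F G X} {π : Representation F G Y} {υ : Representation F G Z}

theorem comp_mem_equivHom {f : X →ₗ[F] Y} {f' : Y →ₗ[F] Z} (hf : f ∈ EquivHom τ π)
    (hf' : f' ∈ EquivHom π υ) : f' ∘ₗ f ∈ EquivHom τ υ := fun g x => by
  simp [hf g x, hf' g (f x)]

theorem symm_mem_equivHom {e : X ≃ₗ[F] Y} (he : (e : X →ₗ[F] Y) ∈ EquivHom τ π) :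
    (e.symm : Y →ₗ[F] X) ∈ EquivHom π τ := fun g y => by
  apply e.injective
  simpa using (he g (e.symm y)).symm

theorem mem_equivHom_comp {H : Type} [Group H] (φ : H →* G) {f : X →ₗ[F] Y}
    (hf : f ∈ EquivHom τ π) : f ∈ EquivHom (τ.comp φ) (π.comp φ) := fun h => hf (φ h)

theorem mem_equivHom_dual_iff {D : X →ₗ[F] X →ₗ[F] F} :
    D ∈ EquivHom τ τ.dual ↔ BilinInvariant τ D := by
  refine ⟨fun hD g x y => ?_, fun hD g x => LinearMap.ext fun y => ?_⟩
  · simpa [Representation.dual_apply, Module.Dual.transpose_apply] using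
      LinearMap.congr_fun (hD g x) (τ g y)
  · simpa [Representation.dual_apply, Module.Dual.transpose_apply] using hD g x (τ g⁻¹ y)

theorem IsIrred.comp_of_surjective {H : Type} [Group H] {φ : H →* G}
    (hφ : Function.Surjective φ) (hτ : IsIrred τ) : IsIrred (τ.comp φ) :=
  ⟨hτ.1, fun U hU => hτ.2 U fun g => by
    obtain ⟨h, rfl⟩ := hφ g
    exact hU h⟩

theorem bijective_of_mem_equivHom (hτ : IsIrred τ) (hπ : IsIrred π) {f : X →ₗ[F] Y}
    (hf : f ∈ EquivHom τ π) (hf0 : f ≠ 0) : Function.Bijective f := by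
  constructor
  · refine LinearMap.ker_eq_bot.mp ((hτ.2 _ fun g x hx => ?_).resolve_right fun htop => hf0 ?_)
    · simp_all [LinearMap.mem_ker, hf g x]
    · exact LinearMap.ker_eq_top.mp htop
  · refine LinearMap.range_eq_top.mp ((hπ.2 _ fun g y hy => ?_).resolve_left fun hbot => hf0 ?_)
    · obtain ⟨x, rfl⟩ := hy
      exact ⟨τ g x, hf g x⟩
    · exact LinearMap.range_eq_bot.mp hbot

end Intertwiners

section SelfDual

variable {F : Type} [Field F] {G : Type} [Group G] {X : Type} [AddCommGroup X] [Module F X]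
variable {τ : Representation F G X}

def HasScalarCommutant (τ : Representation F G X) : Prop :=
  ∀ f ∈ EquivHom τ τ, ∃ c : F, f = c • LinearMap.id

theorem IsSplitting.hasScalarCommutant (hs : IsSplitting F G) [FiniteDimensional F X]
    (hτ : IsIrred τ) : HasScalarCommutant τ :=
  hs X τ inferInstance hτ

theorem hasScalarCommutant_of_comp {H : Type} [Group H] {φ : H →* G}
    (hτ : HasScalarCommutant (τ.comp φ)) : HasScalarCommutant τ :=
  fun f hf => hτ f (mem_equivHom_comp φ hf)

variable (e : X ≃ₗ[F] Module.Dual F X)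

theorem nondeg_of_linearEquiv : Nondeg e.toLinearMap :=
  fun x hx => e.injective (by ext y; simpa using hx y)

theorem exists_apply_eq_one [Nontrivial X] : ∃ x y : X, e x y = 1 := by
  obtain ⟨x, hx⟩ := exists_ne (0 : X)
  obtain ⟨y, hy⟩ : ∃ y, e x y ≠ 0 := by
    by_contra! h
    exact hx (nondeg_of_linearEquiv e x h)
  exact ⟨x, (e x y)⁻¹ • y, by simp [hy]⟩

theorem exists_eq_smul_of_mem_equivHom_dual (hτ : HasScalarCommutant τ)
    (he : e.toLinearMap ∈ EquivHom τ τ.dual) {D : X →ₗ[F] Module.Dual F X}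
    (hD : D ∈ EquivHom τ τ.dual) : ∃ c : F, D = c • e.toLinearMap := by
  obtain ⟨c, hc⟩ := hτ _ (comp_mem_equivHom hD (symm_mem_equivHom he))
  refine ⟨c, LinearMap.ext fun x => ?_⟩
  simpa using congr_arg e (LinearMap.congr_fun hc x)

/-- The transpose of `e` is `c • e` with `c ^ 2 = 1`, so `c = 1` in characteristic 2. -/
theorem isSymm_of_mem_equivHom_dual [CharP F 2] [Nontrivial X] (hτ : HasScalarCommutant τ)
    (he : e.toLinearMap ∈ EquivHom τ τ.dual) :
    LinearMap.BilinForm.IsSymm e.toLinearMap := by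
  have hflip : LinearMap.flip e.toLinearMap ∈ EquivHom τ τ.dual :=
    mem_equivHom_dual_iff.mpr fun g x y => (mem_equivHom_dual_iff.mp he) g y x
  obtain ⟨c, hc⟩ := exists_eq_smul_of_mem_equivHom_dual e hτ he hflip
  have hswap (x y : X) : e y x = c * e x y := by
    simpa using LinearMap.congr_fun₂ hc x y
  obtain ⟨x, y, hxy⟩ := exists_apply_eq_one e
  have hc2 : c ^ 2 = 1 ^ 2 := by
    have := hswap y x
    rw [hswap x y, ← mul_assoc] at this
    have := mul_right_cancel₀ (hxy ▸ one_ne_zero) (this.symm.trans (one_mul _).symm)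
    rw [sq, this, one_pow]
  have hc1 : c = 1 := frobenius_inj F 2 hc2
  exact ⟨fun x y => by simpa [hc1] using hswap y x⟩

end SelfDual

section Clifford

variable {F : Type} [Field F] {G : Type} [Group G] {V : Type} [AddCommGroup V] [Module F V]
variable {τ : Representation F G V} {U : Submodule F V}

def IsMinSubrep (τ : Representation F G V) : Submodule F V → Prop :=
  Minimal fun U => IsSubrep τ U ∧ U ≠ ⊥

def IsSubrep.restrict (hU : IsSubrep τ U) : Representation F G U :=
  (Subrepresentation.mk U hU).toRepresentation

theorem IsSubrep.subtype_mem_equivHom (hU : IsSubrep τ U) :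
    U.subtype ∈ EquivHom hU.restrict τ :=
  fun _ _ => rfl

theorem IsMinSubrep.isIrred (hU : IsMinSubrep τ U) : IsIrred hU.1.1.restrict := by
  refine ⟨Submodule.nontrivial_iff_ne_bot.mpr hU.1.2, fun U' hU' => ?_⟩
  have hmap : IsSubrep τ (U'.map U.subtype) := by
    rintro g _ ⟨u, hu, rfl⟩
    exact ⟨_, hU' g u hu, rfl⟩
  have hinj := Submodule.map_injective_of_injective U.injective_subtype
  by_cases hbot : U'.map U.subtype = ⊥
  · exact Or.inl (hinj (by rw [hbot, Submodule.map_bot]))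
  · refine Or.inr (hinj ?_)
    rw [Submodule.map_subtype_top]
    have hle := Submodule.map_subtype_le U U'
    exact le_antisymm hle (hU.2 ⟨hmap, hbot⟩ hle)

theorem exists_isMinSubrep_le [FiniteDimensional F V] (hU : IsSubrep τ U) (hU0 : U ≠ ⊥) :
    ∃ U₀ ≤ U, IsMinSubrep τ U₀ :=
  exists_minimal_le_of_wellFoundedLT _ U ⟨hU, hU0⟩

variable {N : Subgroup G} [N.Normal] {ρ : Representation F G V}

theorem IsSubrep.map_rep (hU : IsSubrep (ρ.comp N.subtype) U) (g : G) :
    IsSubrep (ρ.comp N.subtype) (U.map (ρ g)) := by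
  rintro n _ ⟨u, hu, rfl⟩
  have hconj : g⁻¹ * n * g ∈ N := by
    simpa using (inferInstance : N.Normal).conj_mem n n.2 g⁻¹
  refine ⟨ρ (g⁻¹ * n * g) u, hU ⟨_, hconj⟩ u hu, ?_⟩
  simp [← Module.End.mul_apply, ← map_mul, mul_assoc]

theorem map_rep_inv_map_rep (g : G) (U : Submodule F V) : (U.map (ρ g)).map (ρ g⁻¹) = U := by
  rw [← Submodule.map_comp, show ρ g⁻¹ ∘ₗ ρ g = LinearMap.id from
    LinearMap.ext (ρ.inv_self_apply g), Submodule.map_id]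

theorem map_rep_map_rep_inv (g : G) (U : Submodule F V) : (U.map (ρ g⁻¹)).map (ρ g) = U := by
  simpa using map_rep_inv_map_rep (ρ := ρ) g⁻¹ U

theorem IsMinSubrep.map_rep (hU : IsMinSubrep (ρ.comp N.subtype) U) (g : G) :
    IsMinSubrep (ρ.comp N.subtype) (U.map (ρ g)) := by
  refine ⟨⟨hU.1.1.map_rep g, fun h => hU.1.2 ?_⟩, fun U' hU' hle => ?_⟩
  · rw [← map_rep_inv_map_rep g U, h, Submodule.map_bot]
  · have hle' : U'.map (ρ g⁻¹) ≤ U := by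
      simpa [map_rep_inv_map_rep] using Submodule.map_mono (f := ρ g⁻¹) hle
    have hmin := hU.2 ⟨hU'.1.map_rep g⁻¹, fun h => hU'.2 ?_⟩ hle'
    · simpa [map_rep_map_rep_inv] using Submodule.map_mono (f := ρ g) hmin
    · simpa [map_rep_map_rep_inv] using congr_arg (Submodule.map (ρ g)) h

/-- Clifford: the sum is `G`-invariant because each `ρ g` permutes the minimal `N`-invariant
subspaces. -/
theorem sSup_isMinSubrep_eq_top [FiniteDimensional F V] (hρ : IsIrred ρ) :
    sSup {U | IsMinSubrep (ρ.comp N.subtype) U} = ⊤ := by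
  set S := sSup {U | IsMinSubrep (ρ.comp N.subtype) U}
  have hS : IsSubrep ρ S := fun g => by
    refine sSup_le (a := S.comap (ρ g)) fun U hU => ?_
    rw [← Submodule.map_le_iff_le_comap]
    exact le_sSup (hU.map_rep g)
  have : Nontrivial V := hρ.1
  refine (hρ.2 S hS).resolve_left fun hbot => ?_
  obtain ⟨U₀, -, hU₀⟩ := exists_isMinSubrep_le (τ := ρ.comp N.subtype) (U := ⊤)
    (fun _ _ _ => Submodule.mem_top) top_ne_bot
  exact hU₀.1.2 (le_bot_iff.mp (hbot ▸ le_sSup hU₀))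

end Clifford

section MultiplicityForm

variable {F : Type} [Field F] {G : Type} [Group G]
variable {V W : Type} [AddCommGroup V] [Module F V] [AddCommGroup W] [Module F W]
variable {σ : Representation F G W} {π : Representation F G V}
variable (B : V →ₗ[F] V →ₗ[F] F) (eW : W ≃ₗ[F] Module.Dual F W)

def formAdjoint (f : W →ₗ[F] V) : V →ₗ[F] W :=
  eW.symm.toLinearMap ∘ₗ B.compl₂ f

theorem apply_formAdjoint (f : W →ₗ[F] V) (v : V) (w : W) :
    eW (formAdjoint B eW f v) w = B v (f w) := by
  simp [formAdjoint]

variable {B eW}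

theorem formAdjoint_mem_equivHom (hB : BilinInvariant π B)
    (heW : eW.toLinearMap ∈ EquivHom σ σ.dual) {f : W →ₗ[F] V}
    (hf : f ∈ EquivHom σ π) : formAdjoint B eW f ∈ EquivHom π σ := by
  refine comp_mem_equivHom (fun g v => LinearMap.ext fun w => ?_) (symm_mem_equivHom heW)
  have := hB g v (π g⁻¹ (f w))
  simp_all [Representation.dual_apply, Module.Dual.transpose_apply, hf g⁻¹ w]

theorem eq_zero_of_formAdjoint_eq_zero (hB : Nondeg B) (hBs : LinearMap.BilinForm.IsSymm B)
    {f : W →ₗ[F] V} (hf : formAdjoint B eW f = 0) : f = 0 :=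
  LinearMap.ext fun w => hB _ fun v => by
    rw [hBs.eq, ← apply_formAdjoint, hf, LinearMap.zero_apply, map_zero, LinearMap.zero_apply]

variable (σ π B) in
/-- By Schur's lemma `B (f ·) (f' ·)` is a multiple of `eW`; normalizing `eW w₀ w₀' = 1`, the
factor is read off at `(w₀, w₀')`. -/
def multiplicityForm (w₀ w₀' : W) : LinearMap.BilinForm F (EquivHom σ π) :=
  B.compl₁₂ ((LinearMap.applyₗ w₀).comp (EquivHom σ π).subtype)
    ((LinearMap.applyₗ w₀').comp (EquivHom σ π).subtype)

variable {w₀ w₀' : W}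

theorem multiplicityForm_apply (f f' : EquivHom σ π) :
    multiplicityForm σ π B w₀ w₀' f f' = B (f.1 w₀) (f'.1 w₀') := rfl

theorem apply_eq_multiplicityForm_mul (hσ : HasScalarCommutant σ) (hB : BilinInvariant π B)
    (heW : eW.toLinearMap ∈ EquivHom σ σ.dual) (h1 : eW w₀ w₀' = 1)
    (f f' : EquivHom σ π) (a b : W) :
    B (f.1 a) (f'.1 b) = multiplicityForm σ π B w₀ w₀' f f' * eW a b := by
  have hD : B.compl₁₂ f.1 f'.1 ∈ EquivHom σ σ.dual :=
    mem_equivHom_dual_iff.mpr fun g a b => by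
      simpa [f.2 g a, f'.2 g b] using hB g (f.1 a) (f'.1 b)
  obtain ⟨c, hc⟩ := exists_eq_smul_of_mem_equivHom_dual eW hσ heW hD
  have hform (a b : W) : B (f.1 a) (f'.1 b) = c * eW a b := by
    simpa using LinearMap.congr_fun₂ hc a b
  rw [multiplicityForm_apply, hform a b, hform w₀ w₀', h1, mul_one]

theorem multiplicityForm_isSymm (hσ : HasScalarCommutant σ) (hB : BilinInvariant π B)
    (hBs : LinearMap.BilinForm.IsSymm B) (heW : eW.toLinearMap ∈ EquivHom σ σ.dual)
    (heWs : LinearMap.BilinForm.IsSymm eW.toLinearMap) (h1 : eW w₀ w₀' = 1) :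
    (multiplicityForm σ π B w₀ w₀').IsSymm := by
  refine ⟨fun f f' => ?_⟩
  have h1' : eW w₀' w₀ = 1 := by simpa [h1] using heWs.eq w₀' w₀
  rw [multiplicityForm_apply, hBs.eq, apply_eq_multiplicityForm_mul hσ hB heW h1, h1', mul_one]

/-- `ψ` is the inverse of the Schur isomorphism `formAdjoint B eW f ∘ₗ h`. -/
theorem exists_multiplicityForm_eq_one (hσ : IsIrred σ) (hB : BilinInvariant π B)
    (heW : eW.toLinearMap ∈ EquivHom σ σ.dual) (h1 : eW w₀ w₀' = 1)
    {Y : Type} [AddCommGroup Y] [Module F Y] {τ : Representation F G Y} (hτ : IsIrred τ)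
    {h : Y →ₗ[F] V} (hh : h ∈ EquivHom τ π) (f : EquivHom σ π)
    (hf : formAdjoint B eW f ∘ₗ h ≠ 0) :
    ∃ ψ : W →ₗ[F] Y, ∃ hψ : h ∘ₗ ψ ∈ EquivHom σ π,
      multiplicityForm σ π B w₀ w₀' ⟨h ∘ₗ ψ, hψ⟩ f = 1 := by
  have hT := comp_mem_equivHom hh (formAdjoint_mem_equivHom hB heW f.2)
  set T := LinearEquiv.ofBijective _ (bijective_of_mem_equivHom hτ hσ hT hf)
  refine ⟨T.symm, comp_mem_equivHom (symm_mem_equivHom hT) hh, ?_⟩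
  rw [multiplicityForm_apply, ← apply_formAdjoint B eW]
  have : formAdjoint B eW f (h (T.symm w₀)) = w₀ := T.apply_symm_apply w₀
  simpa [this] using h1

theorem multiplicityForm_nondegenerate (hσ : IsIrred σ) (hσs : HasScalarCommutant σ)
    (hB : BilinInvariant π B) (hBn : Nondeg B) (hBs : LinearMap.BilinForm.IsSymm B)
    (heW : eW.toLinearMap ∈ EquivHom σ σ.dual)
    (heWs : LinearMap.BilinForm.IsSymm eW.toLinearMap) (h1 : eW w₀ w₀' = 1)
    (hπ : sSup {U | IsMinSubrep π U} = ⊤) :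
    (multiplicityForm σ π B w₀ w₀').Nondegenerate := by
  have hΛ := (multiplicityForm_isSymm hσs hB hBs heW heWs h1).isRefl
  refine hΛ.nondegenerate_iff_separatingRight.mpr
    fun f hf => Subtype.ext (eq_zero_of_formAdjoint_eq_zero (eW := eW) hBn hBs ?_)
  suffices ∀ U ∈ {U | IsMinSubrep π U}, U ≤ LinearMap.ker (formAdjoint B eW f) by
    rw [← LinearMap.ker_eq_top, eq_top_iff, ← hπ]
    exact sSup_le this
  intro U hU u hu
  by_contra hne
  obtain ⟨ψ, hψ, hone⟩ := exists_multiplicityForm_eq_one hσ hB heW h1 hU.isIrred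
    hU.1.1.subtype_mem_equivHom f (fun h0 => hne (LinearMap.congr_fun h0 ⟨u, hu⟩))
  exact one_ne_zero (hone.symm.trans (hf _))

end MultiplicityForm

section NormalSubgroup

variable {F : Type} [Field F] {G : Type} [Group G] {N : Subgroup G} [N.Normal]
variable {V W : Type} [AddCommGroup V] [Module F V] [AddCommGroup W] [Module F W]
variable {ρ : Representation F G V} {σ : Representation F N W}

theorem rep_comp_mem_equivHom {k : W →ₗ[F] V} (hk : k ∈ EquivHom σ (ρ.comp N.subtype))
    (g : G) :
    ρ g ∘ₗ k ∈
      EquivHom (σ.comp (MulAut.conjNormal g⁻¹).toMonoidHom) (ρ.comp N.subtype) :=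
  fun n w => by
    have := hk (MulAut.conjNormal g⁻¹ n) w
    simp_all [← Module.End.mul_apply, ← map_mul, mul_assoc]

variable [CharP F 2] {B : V →ₗ[F] V →ₗ[F] F} {eW : W ≃ₗ[F] Module.Dual F W}
variable {w₀ w₀' : W}

/-- Otherwise `exists_multiplicityForm_eq_one` turns `ρ g ∘ k` into an isotropic intertwiner
pairing with `f` to `1`. -/
theorem formAdjoint_comp_rep_comp_eq_zero (hσ : IsIrred σ) (hσs : HasScalarCommutant σ)
    (hB : BilinInvariant ρ B) (heW : eW.toLinearMap ∈ EquivHom σ σ.dual)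
    (h1 : eW w₀ w₀' = 1) (hΛ : (multiplicityForm σ (ρ.comp N.subtype) B w₀ w₀').IsSymm)
    {f : EquivHom σ (ρ.comp N.subtype)}
    (hf : ∀ k ∈ LinearMap.BilinForm.isotropicSubspace _ hΛ,
      multiplicityForm σ (ρ.comp N.subtype) B w₀ w₀' k f = 0)
    {k : EquivHom σ (ρ.comp N.subtype)} (hk : k ∈ LinearMap.BilinForm.isotropicSubspace _ hΛ)
    (g : G) : formAdjoint B eW f ∘ₗ (ρ g ∘ₗ k.1) = 0 := by
  have hBN : BilinInvariant (ρ.comp N.subtype) B := fun n => hB n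
  by_contra hne
  obtain ⟨ψ, hψ, hone⟩ := exists_multiplicityForm_eq_one hσ hBN heW h1
    (hσ.comp_of_surjective (MulEquiv.surjective _)) (rep_comp_mem_equivHom k.2 g) f hne
  refine one_ne_zero (hone.symm.trans (hf _ ?_))
  have hkk : multiplicityForm σ (ρ.comp N.subtype) B w₀ w₀' k k = 0 := hk
  change B (ρ g (k.1 (ψ w₀))) (ρ g (k.1 (ψ w₀'))) = 0
  rw [hB, apply_eq_multiplicityForm_mul hσs hBN heW h1 k k, hkk, zero_mul]

theorem eq_zero_of_forall_isotropic (hρ : IsIrred ρ) (hσ : IsIrred σ)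
    (hσs : HasScalarCommutant σ) (hB : BilinInvariant ρ B) (hBn : Nondeg B)
    (hBs : LinearMap.BilinForm.IsSymm B) (heW : eW.toLinearMap ∈ EquivHom σ σ.dual)
    (h1 : eW w₀ w₀' = 1) (hΛ : (multiplicityForm σ (ρ.comp N.subtype) B w₀ w₀').IsSymm)
    (hK : LinearMap.BilinForm.isotropicSubspace _ hΛ ≠ ⊥) {f : EquivHom σ (ρ.comp N.subtype)}
    (hf : ∀ k ∈ LinearMap.BilinForm.isotropicSubspace _ hΛ,
      multiplicityForm σ (ρ.comp N.subtype) B w₀ w₀' k f = 0) : f = 0 := by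
  set Z : Submodule F V := ⨅ g, LinearMap.ker (formAdjoint B eW f ∘ₗ ρ g)
  have hZ (v : V) : v ∈ Z ↔ ∀ g, formAdjoint B eW f (ρ g v) = 0 := by simp [Z]
  have hZsub : IsSubrep ρ Z := fun g v hv => (hZ _).mpr fun g' => by
    simpa [← Module.End.mul_apply, ← map_mul] using (hZ v).mp hv (g' * g)
  have hZbot : Z ≠ ⊥ := by
    obtain ⟨k, hkK, hk0⟩ := Submodule.exists_mem_ne_zero_of_ne_bot hK
    obtain ⟨w, hw⟩ : ∃ w, k.1 w ≠ 0 := by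
      by_contra! h
      exact hk0 (Subtype.ext (LinearMap.ext h))
    refine fun hbot => hw ((Submodule.mem_bot F).mp (hbot ▸ (hZ _).mpr fun g => ?_))
    exact LinearMap.congr_fun
      (formAdjoint_comp_rep_comp_eq_zero hσ hσs hB heW h1 hΛ hf hkK g) w
  have hZtop := (hρ.2 Z hZsub).resolve_left hZbot
  refine Subtype.ext (eq_zero_of_formAdjoint_eq_zero (eW := eW) hBn hBs (LinearMap.ext fun v => ?_))
  simpa using (hZ v).mp (hZtop ▸ Submodule.mem_top) 1

end NormalSubgroup

theorem stmt_9_general {F : Type} [Field F] [CharP F 2] [PerfectField F]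
    {G : Type} [Group G] (N : Subgroup G) [N.Normal]
    (hsplit : ∀ H : Subgroup G, IsSplitting F ↥H)
    {V : Type} [AddCommGroup V] [Module F V] [FiniteDimensional F V]
    (ρ : Representation F G V) (hirrV : IsIrred ρ) (hsdV : IsSelfDual ρ)
    {W : Type} [AddCommGroup W] [Module F W] [FiniteDimensional F W]
    (σ : Representation F ↥N W) (hirrW : IsIrred σ) (hsdW : IsSelfDual σ)
    (h : 1 < repMult σ (ρ.comp N.subtype)) :
    Even (repMult σ (ρ.comp N.subtype)) := by
  obtain ⟨eV, heV⟩ := hsdV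
  obtain ⟨eW, heW⟩ := hsdW
  have : Nontrivial V := hirrV.1
  have : Nontrivial W := hirrW.1
  have hρs : HasScalarCommutant ρ := hasScalarCommutant_of_comp <|
    (hsplit ⊤).hasScalarCommutant <|
      hirrV.comp_of_surjective (φ := (⊤ : Subgroup G).subtype) fun g => ⟨⟨g, trivial⟩, rfl⟩
  have hσs : HasScalarCommutant σ := (hsplit N).hasScalarCommutant hirrW
  have hB : BilinInvariant ρ eV := mem_equivHom_dual_iff.mp heV
  have hBN : BilinInvariant (ρ.comp N.subtype) eV := fun n => hB n
  have hBs := isSymm_of_mem_equivHom_dual eV hρs heV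
  have heWs := isSymm_of_mem_equivHom_dual eW hσs heW
  obtain ⟨w₀, w₀', h1⟩ := exists_apply_eq_one eW
  set Λ := multiplicityForm σ (ρ.comp N.subtype) eV w₀ w₀'
  have hΛs : Λ.IsSymm := multiplicityForm_isSymm hσs hBN hBs heW heWs h1
  have hΛn : Λ.Nondegenerate := multiplicityForm_nondegenerate hirrW hσs hBN
    (nondeg_of_linearEquiv eV) hBs heW heWs h1 (sSup_isMinSubrep_eq_top hirrV)
  by_cases halt : Λ.IsAlt
  · exact LinearMap.BilinForm.even_finrank_of_isAlt hΛn halt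
  obtain ⟨f, hfK, hf0⟩ := Submodule.exists_mem_ne_zero_of_ne_bot
    (LinearMap.BilinForm.orthogonal_isotropicSubspace_ne_bot hΛs hΛn halt)
  exact absurd (eq_zero_of_forall_isotropic hirrV hirrW hσs hB (nondeg_of_linearEquiv eV) hBs heW
    h1 hΛs (LinearMap.BilinForm.isotropicSubspace_ne_bot hΛs h) hfK) hf0

/-- if a self-dual irreducible FN-module W occurs with multiplicity e > 1 in the
restriction of a self-dual irreducible FG-module, then e is even. -/
theorem stmt_9 {F : Type} [Field F] [CharP F 2] [PerfectField F]
    {G : Type} [Group G] [Finite G] (N : Subgroup G) [N.Normal]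
    (hsplit : ∀ H : Subgroup G, IsSplitting F ↥H)
    {V : Type} [AddCommGroup V] [Module F V] [FiniteDimensional F V]
    (ρ : Representation F G V) (hirrV : IsIrred ρ) (hsdV : IsSelfDual ρ)
    {W : Type} [AddCommGroup W] [Module F W] [FiniteDimensional F W]
    (σ : Representation F ↥N W) (hirrW : IsIrred σ) (hsdW : IsSelfDual σ)
    (h : 1 < repMult σ (ρ.comp N.subtype)) :
    Even (repMult σ (ρ.comp N.subtype)) :=
  stmt_9_general N hsplit ρ hirrV hsdV σ hirrW hsdW h
end

section
/- Let G be a finite group, F a perfect field of characteristic 2, and M a self-dual irreducible FG-module such that there is no FG-module W with socle isomorphic to the trivial module F and W/soc(W) ≅ M nonsplit (equivalently Ext¹_FG(M, F) = 0), and M is nontrivial. Then M is of quadratic type: every (equivalently, some) non-degenerate G-invariant alternating bilinear form B on M is the polarization of a G-invariant quadratic form. -/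
open Module

/-! In characteristic 2 the alternating form `B` is the polar form of some quadratic form `Q`,
and for `g ∈ G` the form `Q ∘ ρ g - Q` has zero polar, hence (as `F` is perfect) is the square of
a linear form `φ g`. The map `g ↦ φ g` is a 1-cocycle with values in `M*`, i.e. an extension of `M`
by the trivial module. Since `Ext¹(M, F) = 0` it is a coboundary, `φ g = ψ ∘ ρ g - ψ`, and then
`Q + ψ²` is a `G`-invariant quadratic form with polar form `B`. -/

open QuadraticMap

theorem LinearMap.BilinForm.exists_add_flip_eq {R M : Type*} [CommRing R] [AddCommGroup M]
    [Module R M] [Module.Free R M] (B : LinearMap.BilinForm R M) (hB : B.IsSymm)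
    (hB₀ : ∀ x, B x x = 0) : ∃ B' : LinearMap.BilinForm R M, B' + LinearMap.flip B' = B := by
  let b := Module.Free.chooseBasis R M
  -- `B'` is the strictly upper triangular part of `B` for some ordering of a basis.
  let _ := IsWellOrder.linearOrder (WellOrderingRel (α := Module.Free.ChooseBasisIndex R M))
  refine ⟨b.constr R fun i => b.constr R fun j => if i < j then B (b i) (b j) else 0, ?_⟩
  refine b.ext fun i => b.ext fun j => ?_
  simp only [LinearMap.add_apply, Module.Basis.constr_basis]
  rcases lt_trichotomy i j with hij | rfl | hji
  · simp [hij, hij.not_gt]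
  · simp [hB₀]
  · simp [hji, hji.not_gt, ← hB.eq]

namespace QuadraticForm

variable {R M : Type*} [CommRing R] [CharP R 2] [AddCommGroup M] [Module R M]

theorem exists_polarBilin_eq_of_isAlt [Module.Free R M] (B : LinearMap.BilinForm R M)
    (hB : B.IsAlt) : ∃ Q : QuadraticForm R M, Q.polarBilin = B := by
  have hsymm : B.IsSymm := ⟨fun x y => (CharTwo.neg_eq _).symm.trans (hB.neg_eq x y)⟩
  obtain ⟨B', hB'⟩ := B.exists_add_flip_eq hsymm hB.self_eq_zero
  exact ⟨B'.toQuadraticMap, by rw [LinearMap.BilinMap.polarBilin_toQuadraticMap, hB']⟩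

end QuadraticForm

namespace QuadraticMap

variable {R M : Type*} [CommRing R] [AddCommGroup M] [Module R M]

theorem polar_comp_sub_eq_zero (Q : QuadraticMap R M R) (f : M →ₗ[R] M)
    (hf : ∀ x y, polar Q (f x) (f y) = polar Q x y) (x y : M) :
    polar (Q.comp f - Q) x y = 0 := by
  have hxy := hf x y
  simp only [polar, map_add, sub_apply, comp_apply] at hxy ⊢
  linear_combination hxy

variable [CharP R 2] [PerfectRing R 2]

/-- A quadratic form with zero polar is additive and Frobenius-semilinear, so composing it with
the inverse Frobenius gives a linear form. -/
noncomputable def linearSqrt (Q : QuadraticMap R M R) (hQ : ∀ x y, polar Q x y = 0) :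
    M →ₗ[R] R where
  toFun x := (frobeniusEquiv R 2).symm (Q x)
  map_add' x y := by
    have hadd := hQ x y
    rw [polar, sub_sub, sub_eq_zero] at hadd
    rw [hadd, map_add]
  map_smul' a x := by
    rw [QuadraticMap.map_smul, smul_eq_mul, ← pow_two, map_mul, frobeniusEquiv_symm_pow]
    rfl

theorem linearSqrt_sq (Q : QuadraticMap R M R) (hQ : ∀ x y, polar Q x y = 0) (x : M) :
    Q.linearSqrt hQ x ^ 2 = Q x :=
  frobeniusEquiv_symm_pow_p R 2 (Q x)

end QuadraticMap

section Cocycle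

variable {R G M : Type*} [CommRing R] [Group G] [AddCommGroup M] [Module R M]

def IsCocycle (ρ : Representation R G M) (φ : G → M →ₗ[R] R) : Prop :=
  ∀ g h x, φ (g * h) x = φ g (ρ h x) + φ h x

theorem IsCocycle.apply_one {ρ : Representation R G M} {φ : G → M →ₗ[R] R}
    (hφ : IsCocycle ρ φ) (x : M) : φ 1 x = 0 := by
  simpa using hφ 1 1 x

end Cocycle

section Extension

variable {R G M : Type} [CommRing R] [Group G] [AddCommGroup M] [Module R M]

/-- The extension `0 → R → R × M → M → 0` of `ρ` by the trivial module with class `φ`. -/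
def cocycleExtension (ρ : Representation R G M) (φ : G → M →ₗ[R] R) (hφ : IsCocycle ρ φ) :
    Representation R G (R × M) where
  toFun g := ((LinearMap.fst R R M) + (φ g).comp (LinearMap.snd R R M)).prod
    ((ρ g).comp (LinearMap.snd R R M))
  map_one' := by ext <;> simp [hφ.apply_one]
  map_mul' g h := by ext <;> simp [hφ g h, add_comm]

theorem cocycleExtension_apply (ρ : Representation R G M) (φ : G → M →ₗ[R] R)
    (hφ : IsCocycle ρ φ) (g : G) (w : R × M) :
    cocycleExtension ρ φ hφ g w = (w.1 + φ g w.2, ρ g w.2) := rfl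

/-- `Ext¹(M, R) = 0`: every extension of `ρ` by the trivial module splits. -/
def ExtensionsByTrivialSplit (ρ : Representation R G M) : Prop :=
  ∀ (W : Type) [AddCommGroup W] [Module R W] (τ : Representation R G W)
    (ι : R →ₗ[R] W) (π : W →ₗ[R] M),
    (∀ (g : G) (a : R), τ g (ι a) = ι a) →
    (∀ (g : G) (w : W), π (τ g w) = ρ g (π w)) →
    Function.Injective ι → Function.Surjective π →
    LinearMap.range ι = LinearMap.ker π →
    ∃ s : M →ₗ[R] W, (∀ (g : G) (m : M), s (ρ g m) = τ g (s m)) ∧ π.comp s = LinearMap.id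

theorem IsCocycle.exists_coboundary {ρ : Representation R G M} (hext : ExtensionsByTrivialSplit ρ)
    {φ : G → M →ₗ[R] R} (hφ : IsCocycle ρ φ) :
    ∃ ψ : M →ₗ[R] R, ∀ g x, ψ (ρ g x) = ψ x + φ g x := by
  obtain ⟨s, hs, hsπ⟩ := hext _ (cocycleExtension ρ φ hφ) (LinearMap.inl R R M)
    (LinearMap.snd R R M) (fun g a => by simp [cocycleExtension_apply])
    (fun g w => rfl) LinearMap.inl_injective LinearMap.snd_surjective (LinearMap.range_inl R R M)
  have hs₂ (x : M) : (s x).2 = x := LinearMap.congr_fun hsπ x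
  refine ⟨(LinearMap.fst R R M).comp s, fun g x => ?_⟩
  simpa [hs₂, cocycleExtension_apply] using congr_arg Prod.fst (hs g x)

end Extension

section Defect

variable {R G M : Type*} [CommRing R] [CharP R 2] [PerfectRing R 2] [Group G]
  [AddCommGroup M] [Module R M] (ρ : Representation R G M) (Q : QuadraticForm R M)
  (hQ : ∀ g x y, polar Q (ρ g x) (ρ g y) = polar Q x y)

noncomputable def quadDefect (g : G) : M →ₗ[R] R :=
  (Q.comp (ρ g) - Q).linearSqrt (Q.polar_comp_sub_eq_zero (ρ g) (hQ g))

theorem quadDefect_sq (g : G) (x : M) : quadDefect ρ Q hQ g x ^ 2 = Q (ρ g x) + Q x := by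
  rw [quadDefect, QuadraticMap.linearSqrt_sq, sub_apply, comp_apply, CharTwo.sub_eq_add]

theorem isCocycle_quadDefect : IsCocycle ρ (quadDefect ρ Q hQ) := fun g h x =>
  injective_pow_p R 2 <| by
    rw [CharTwo.add_sq, quadDefect_sq, quadDefect_sq, quadDefect_sq, map_mul,
      Module.End.mul_apply]
    linear_combination (-Q (ρ h x)) * CharTwo.two_eq_zero (R := R)

end Defect

section Field

variable {F G M : Type} [Field F] [CharP F 2] [AddCommGroup M] [Module F M]

theorem polarizesTo_add_sq (Q : QuadraticForm F M) (ψ : M →ₗ[F] F) :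
    PolarizesTo (fun x => Q x + ψ x ^ 2) Q.polarBilin := by
  refine ⟨fun a x => ?_, fun x y => ?_⟩ <;> beta_reduce
  · rw [QuadraticMap.map_smul, map_smul, smul_eq_mul, smul_eq_mul]
    ring
  · rw [polarBilin_apply_apply, polar, ψ.map_add, CharTwo.add_sq]
    ring

theorem quadInvariant_add_sq [Group G] [PerfectRing F 2] (ρ : Representation F G M)
    (Q : QuadraticForm F M) (hQ : ∀ g x y, polar Q (ρ g x) (ρ g y) = polar Q x y)
    {ψ : M →ₗ[F] F} (hψ : ∀ g x, ψ (ρ g x) = ψ x + quadDefect ρ Q hQ g x) :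
    QuadInvariant ρ (fun x => Q x + ψ x ^ 2) := fun g x => by
  beta_reduce
  rw [hψ, CharTwo.add_sq, quadDefect_sq]
  linear_combination (Q (ρ g x)) * CharTwo.two_eq_zero (R := F)

end Field

theorem stmt_16_general {F : Type} [Field F] [CharP F 2] [PerfectField F]
    {G : Type} [Group G]
    {M : Type} [AddCommGroup M] [Module F M]
    (ρ : Representation F G M)
    (hext : ∀ (W : Type) [AddCommGroup W] [Module F W] (τ : Representation F G W)
        (ι : F →ₗ[F] W) (π : W →ₗ[F] M),
      (∀ (g : G) (a : F), τ g (ι a) = ι a) →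
      (∀ (g : G) (w : W), π (τ g w) = ρ g (π w)) →
      Function.Injective ι → Function.Surjective π →
      LinearMap.range ι = LinearMap.ker π →
      ∃ s : M →ₗ[F] W, (∀ (g : G) (m : M), s (ρ g m) = τ g (s m)) ∧
        π.comp s = LinearMap.id) :
    ∀ B : M →ₗ[F] M →ₗ[F] F, BilinInvariant ρ B → Nondeg B → IsAltForm B →
      ∃ Q : M → F, PolarizesTo Q B ∧ QuadInvariant ρ Q := by
  intro B hB _ hBalt
  obtain ⟨Q, rfl⟩ := QuadraticForm.exists_polarBilin_eq_of_isAlt B hBalt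
  obtain ⟨ψ, hψ⟩ := (isCocycle_quadDefect ρ Q hB).exists_coboundary hext
  exact ⟨_, polarizesTo_add_sq Q ψ, quadInvariant_add_sq ρ Q hB hψ⟩

/-- if M is a nontrivial self-dual irreducible FG-module with
Ext¹(M, F) = 0 (every extension of M by the trivial module splits), then every non-degenerate
G-invariant alternating bilinear form on M is the polarization of a G-invariant quadratic
form. -/
theorem stmt_16 {F : Type} [Field F] [CharP F 2] [PerfectField F]
    {G : Type} [Group G] [Finite G]
    {M : Type} [AddCommGroup M] [Module F M] [FiniteDimensional F M]
    (ρ : Representation F G M) (hirr : IsIrred ρ) (hsd : IsSelfDual ρ)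
    (hnt : ¬ IsTrivialRep ρ)
    (hext : ∀ (W : Type) [AddCommGroup W] [Module F W] (τ : Representation F G W)
        (ι : F →ₗ[F] W) (π : W →ₗ[F] M),
      (∀ (g : G) (a : F), τ g (ι a) = ι a) →
      (∀ (g : G) (w : W), π (τ g w) = ρ g (π w)) →
      Function.Injective ι → Function.Surjective π →
      LinearMap.range ι = LinearMap.ker π →
      ∃ s : M →ₗ[F] W, (∀ (g : G) (m : M), s (ρ g m) = τ g (s m)) ∧
        π.comp s = LinearMap.id) :
    ∀ B : M →ₗ[F] M →ₗ[F] F, BilinInvariant ρ B → Nondeg B → IsAltForm B →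
      ∃ Q : M → F, PolarizesTo Q B ∧ QuadInvariant ρ Q :=
  stmt_16_general ρ hext
end

section
/- Let G be the semidihedral group of order 2ⁿ with n ≥ 4, and N = Z(G) its center. Then N has a unique nontrivial irreducible complex character φ (which is therefore self-dual), but no irreducible complex character of G lying over φ is self-dual (real-valued). -/
open Module

/-!
The centre of `G` is `{1, z}` with `z = r ^ 2 ^ (n - 2)`, so its only nontrivial character `φ` has
`φ z = -1`, and `ρ z = -1` on any irreducible `ρ` lying over `φ`. If the character of `ρ` were
real-valued, the orthogonality relation `|G|⁻¹ ∑ χ(g) χ(g⁻¹) = 1` would produce a nonzero, hence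
injective, `G`-map `f : V → V*`. But `s r s = z r⁻¹`, so `ρ s` exchanges the `c`- and
`(-c⁻¹)`-eigenspaces of `ρ r`; their sum is then a subrepresentation, hence all of `V`, and for a
`c`-eigenvector `v` the functional `f v` vanishes on both summands, because `c * c ≠ 1`
(as `c ^ 2 ^ (n - 2) = -1`) and `c * (-c⁻¹) = -1 ≠ 1`.
-/

open Representation

theorem Submonoid.closure_eq_top_of_subgroup_closure {G : Type} [Group G] [Finite G] {S : Set G}
    (hS : Subgroup.closure S = ⊤) : Submonoid.closure S = ⊤ := by
  rw [← Subgroup.closure_toSubmonoid_of_finite, hS, Subgroup.top_toSubmonoid]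

section Irreducible

variable {k G V : Type} [Field k] [Group G] [AddCommGroup V] [Module k V]
  {ρ : Representation k G V}

theorem isSubrep_of_closure_eq_top [Finite G] {S : Set G} (hS : Subgroup.closure S = ⊤)
    {U : Submodule k V} (hU : ∀ g ∈ S, ∀ v ∈ U, ρ g v ∈ U) : IsSubrep ρ U := by
  intro g
  induction (Submonoid.closure_eq_top_of_subgroup_closure hS ▸ Submonoid.mem_top g :
      g ∈ Submonoid.closure S) using Submonoid.closure_induction with
  | mem g hg => exact hU g hg
  | one => simp
  | mul g h _ _ hg hh => exact fun v hv => by simpa using hg _ (hh v hv)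

theorem IsIrred.eq_top_of_mem (hρ : IsIrred ρ) {U : Submodule k V} (hU : IsSubrep ρ U)
    {v : V} (hv : v ∈ U) (hv0 : v ≠ 0) : U = ⊤ :=
  (hρ.2 U hU).resolve_left fun h => hv0 (by simpa [h] using hv)

theorem IsIrred.isIrreducible (hρ : IsIrred ρ) : ρ.IsIrreducible where
  exists_pair_ne := by
    have := hρ.1
    exact ⟨⊥, ⊤, fun h => bot_ne_top (congrArg Subrepresentation.toSubmodule h)⟩
  eq_bot_or_eq_top U := by
    rcases hρ.2 U.toSubmodule U.apply_mem_toSubmodule with h | h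
    · exact .inl (Subrepresentation.toSubmodule_injective h)
    · exact .inr (Subrepresentation.toSubmodule_injective h)

theorem IsIrred.apply_eq_smul_of_mem_center (hρ : IsIrred ρ) {z : G}
    (hz : z ∈ Subgroup.center G) {c : k} {v : V} (hv0 : v ≠ 0) (hv : ρ z v = c • v) (w : V) :
    ρ z w = c • w := by
  have hU : IsSubrep ρ (Module.End.eigenspace (ρ z) c) := fun g u hu => by
    rw [Module.End.mem_eigenspace_iff] at hu ⊢
    rw [← Module.End.mul_apply, ← map_mul, ← Subgroup.mem_center_iff.mp hz, map_mul,
      Module.End.mul_apply, hu, map_smul]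
  have htop := hρ.eq_top_of_mem hU (Module.End.mem_eigenspace_iff.mpr hv) hv0
  exact Module.End.mem_eigenspace_iff.mp (htop ▸ Submodule.mem_top)

end Irreducible

namespace Representation

variable {k G V : Type} [Field k] [Group G] [AddCommGroup V] [Module k V]
  {ρ : Representation k G V}

theorem IntertwiningMap.dual_apply_apply (f : IntertwiningMap ρ ρ.dual) (g : G) (v w : V) :
    f (ρ g v) (ρ g w) = f v w := by
  rw [f.isIntertwining, dual_apply, Module.Dual.transpose_apply, LinearMap.comp_apply,
    inv_self_apply]

theorem IntertwiningMap.dual_apply_apply_eq_zero (f : IntertwiningMap ρ ρ.dual) {g : G}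
    {a b : k} {v w : V} (hv : ρ g v = a • v) (hw : ρ g w = b • w) (hab : a * b ≠ 1) :
    f v w = 0 := by
  have h := f.dual_apply_apply g v w
  rw [hv, hw, map_smul, map_smul, LinearMap.smul_apply, smul_eq_mul, smul_eq_mul,
    ← mul_assoc] at h
  exact (mul_left_eq_self₀.mp h).resolve_left (by rwa [mul_comm])

theorem inv_apply_of_apply_eq_smul {g : G} {a : k} {v : V} (h : ρ g v = a • v) :
    ρ g⁻¹ v = a⁻¹ • v := by
  rcases eq_or_ne a 0 with rfl | ha
  · have hv : v = 0 := by rw [← ρ.inv_self_apply g v, h, zero_smul, map_zero]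
    simp [hv]
  · rw [eq_inv_smul_iff₀ ha, ← map_smul, ← h, inv_self_apply]

theorem apply_conj_eq_neg_inv_smul {r s z : G} (hs : s * s = 1) (hrs : s * r * s = z * r⁻¹)
    (hz : ∀ v, ρ z v = -v) {a : k} {w : V} (hw : ρ r w = a • w) :
    ρ r (ρ s w) = (-a⁻¹) • ρ s w := by
  have hrs' : r * s = s * z * r⁻¹ := by
    rw [mul_assoc s, ← hrs, ← mul_assoc, ← mul_assoc, hs, one_mul]
  rw [← Module.End.mul_apply, ← map_mul, hrs', map_mul, map_mul, Module.End.mul_apply,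
    Module.End.mul_apply, inv_apply_of_apply_eq_smul hw, hz, map_neg, map_smul, neg_smul]

theorem exists_injective_intertwiningMap_dual [Fintype G] [FiniteDimensional k V] [IsAlgClosed k]
    [Invertible (Nat.card G : k)] [ρ.IsIrreducible]
    (hreal : ∀ g, ρ.character g⁻¹ = ρ.character g) :
    ∃ f : IntertwiningMap ρ ρ.dual, Function.Injective f := by
  have hrank : (Module.finrank k (IntertwiningMap ρ ρ.dual) : k) = 1 := by
    rw [← Nat.cast_one, ← IsIrreducible.finrank_intertwiningMap_self ρ,
      ← card_inv_mul_sum_char_mul_char_eq_finrank, ← card_inv_mul_sum_char_mul_char_eq_finrank]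
    refine congrArg _ (Finset.sum_congr rfl fun g _ => ?_)
    rw [char_dual, hreal]
  have : Nontrivial (IntertwiningMap ρ ρ.dual) :=
    Module.nontrivial_of_finrank_pos <| Nat.pos_of_ne_zero fun h => by
      rw [h, Nat.cast_zero] at hrank
      exact zero_ne_one hrank
  obtain ⟨f, hf⟩ := exists_ne (0 : IntertwiningMap ρ ρ.dual)
  exact ⟨f, (IsIrreducible.injective_or_eq_zero f).resolve_right hf⟩

end Representation

section EigenspacesOfGenerator

variable {k G V : Type} [Field k] [Group G] [AddCommGroup V] [Module k V]
  {ρ : Representation k G V} {r s z : G}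

theorem IsIrred.eigenspace_sup_eigenspace_eq_top [Finite G] (hρ : IsIrred ρ)
    (hgen : Subgroup.closure {r, s} = ⊤) (hs : s * s = 1) (hrs : s * r * s = z * r⁻¹)
    (hz : ∀ v, ρ z v = -v) {c : k} (hc : Module.End.HasEigenvalue (ρ r) c) :
    Module.End.eigenspace (ρ r) c ⊔ Module.End.eigenspace (ρ r) (-c⁻¹) = ⊤ := by
  have hrE {a : k} {w : V} (hw : w ∈ Module.End.eigenspace (ρ r) a) :
      ρ r w ∈ Module.End.eigenspace (ρ r) a :=
    Module.End.mem_eigenspace_iff.mp hw ▸ Submodule.smul_mem _ a hw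
  have hsE {a : k} {w : V} (hw : w ∈ Module.End.eigenspace (ρ r) a) :
      ρ s w ∈ Module.End.eigenspace (ρ r) (-a⁻¹) :=
    Module.End.mem_eigenspace_iff.mpr <|
      apply_conj_eq_neg_inv_smul hs hrs hz (Module.End.mem_eigenspace_iff.mp hw)
  obtain ⟨v, hv⟩ := hc.exists_hasEigenvector
  refine hρ.eq_top_of_mem (isSubrep_of_closure_eq_top hgen ?_)
    (Submodule.mem_sup_left (Module.End.mem_eigenspace_iff.mpr hv.apply_eq_smul)) hv.2
  rintro g (rfl | rfl) w hw <;> obtain ⟨w₁, hw₁, w₂, hw₂, rfl⟩ := Submodule.mem_sup.mp hw <;>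
    rw [map_add]
  · exact add_mem (Submodule.mem_sup_left (hrE hw₁)) (Submodule.mem_sup_right (hrE hw₂))
  · have hw₂' := hsE hw₂
    rw [inv_neg, inv_inv, neg_neg] at hw₂'
    exact add_mem (Submodule.mem_sup_right (hsE hw₁)) (Submodule.mem_sup_left hw₂')

theorem IsIrred.not_injective_intertwiningMap_dual [IsAlgClosed k] [Finite G]
    [FiniteDimensional k V] (hk : ringChar k ≠ 2) (hρ : IsIrred ρ)
    (hgen : Subgroup.closure {r, s} = ⊤) (hs : s * s = 1) (q : ℕ)
    (hrs : s * r * s = r ^ (2 * q) * r⁻¹) (hz : ∀ v, ρ (r ^ (2 * q)) v = -v)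
    (f : IntertwiningMap ρ ρ.dual) : ¬ Function.Injective f := by
  intro hf
  have := hρ.1
  obtain ⟨c, hc⟩ := Module.End.exists_eigenvalue (ρ r)
  obtain ⟨v, hv⟩ := hc.exists_hasEigenvector
  have hrv : ρ r v = c • v := hv.apply_eq_smul
  have hcq : c ^ (2 * q) = -1 := by
    have h := hz v
    rw [map_pow, hv.pow_apply, ← neg_one_smul k v] at h
    exact smul_left_injective k hv.2 h
  have hcc : c * c ≠ 1 := fun h => Ring.neg_one_ne_one_of_char_ne_two hk <| by
    rw [← hcq, pow_mul, sq, h, one_pow]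
  have hc0 : c ≠ 0 := fun h => hv.2 <| by
    rw [← ρ.inv_self_apply r v, hrv, h, zero_smul, map_zero]
  have hcc' : c * -c⁻¹ ≠ 1 := by
    rw [mul_neg, mul_inv_cancel₀ hc0]
    exact Ring.neg_one_ne_one_of_char_ne_two hk
  have hfv : f v = 0 := by
    ext w
    have hw : w ∈ Module.End.eigenspace (ρ r) c ⊔ Module.End.eigenspace (ρ r) (-c⁻¹) := by
      rw [hρ.eigenspace_sup_eigenspace_eq_top hgen hs hrs hz hc]
      exact Submodule.mem_top
    obtain ⟨w₁, hw₁, w₂, hw₂, rfl⟩ := Submodule.mem_sup.mp hw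
    rw [Module.End.mem_eigenspace_iff] at hw₁ hw₂
    rw [map_add, f.dual_apply_apply_eq_zero hrv hw₁ hcc, f.dual_apply_apply_eq_zero hrv hw₂ hcc',
      add_zero, LinearMap.zero_apply]
  exact hv.2 (hf (hfv.trans (map_zero f).symm))

end EigenspacesOfGenerator

section Semidihedral

variable {G : Type} [Group G] {r s : G}

theorem mul_pow_mul_of_mul_self_eq_one (hs : s * s = 1) (k : ℕ) :
    s * r ^ k * s = (s * r * s) ^ k := by
  have hs' : s⁻¹ = s := inv_eq_of_mul_eq_one_right hs
  simpa only [hs'] using (conj_pow (a := s) (b := r) (i := k)).symm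

theorem exists_eq_pow_or_eq_pow_mul [Finite G] (hgen : Subgroup.closure {r, s} = ⊤)
    (hs : s * s = 1) {m : ℕ} (hrs : s * r * s = r ^ m) (g : G) :
    ∃ k : ℕ, g = r ^ k ∨ g = r ^ k * s := by
  have hsr (k : ℕ) : s * r ^ k = r ^ (m * k) * s := by
    rw [pow_mul, ← hrs, ← mul_pow_mul_of_mul_self_eq_one hs, mul_assoc _ s, hs, mul_one]
  induction (Submonoid.closure_eq_top_of_subgroup_closure hgen ▸ Submonoid.mem_top g :
      g ∈ Submonoid.closure {r, s}) using Submonoid.closure_induction_left with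
  | one => exact ⟨0, .inl (pow_zero r).symm⟩
  | mul_left x hx y _ ih =>
    obtain ⟨k, rfl | rfl⟩ := ih <;> rcases hx with rfl | rfl
    · exact ⟨k + 1, .inl (pow_succ' x k).symm⟩
    · exact ⟨m * k, .inr (hsr k)⟩
    · exact ⟨k + 1, .inr (by rw [← mul_assoc, ← pow_succ'])⟩
    · exact ⟨m * k, .inl (by rw [← mul_assoc, hsr, mul_assoc, hs, mul_one])⟩

theorem card_le_two_mul_orderOf [Fintype G] (hnf : ∀ g : G, ∃ k : ℕ, g = r ^ k ∨ g = r ^ k * s) :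
    Fintype.card G ≤ 2 * orderOf r := by
  have hsurj :
      Function.Surjective fun p : Fin 2 × Fin (orderOf r) => r ^ (p.2 : ℕ) * s ^ (p.1 : ℕ) := by
    intro g
    obtain ⟨k, rfl | rfl⟩ := hnf g
    · exact ⟨(0, ⟨k % orderOf r, Nat.mod_lt _ (orderOf_pos r)⟩), by simp [pow_mod_orderOf]⟩
    · exact ⟨(1, ⟨k % orderOf r, Nat.mod_lt _ (orderOf_pos r)⟩), by simp [pow_mod_orderOf]⟩
  simpa using Fintype.card_le_of_surjective _ hsurj

theorem orderOf_eq_of_card_eq [Fintype G] (hnf : ∀ g : G, ∃ k : ℕ, g = r ^ k ∨ g = r ^ k * s)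
    {N : ℕ} (hr : r ^ N = 1) (hcard : Fintype.card G = 2 * N) : orderOf r = N := by
  have hN : 0 < N := by linarith [Fintype.card_pos (α := G)]
  have := card_le_two_mul_orderOf hnf
  exact le_antisymm (Nat.le_of_dvd hN (orderOf_dvd_of_pow_eq_one hr)) (by omega)

theorem two_mul_dvd_of_four_mul_dvd {q k : ℕ} (hq : Even q) (hq0 : q ≠ 0)
    (h : 4 * q ∣ (2 * q - 2) * k) : 2 * q ∣ k := by
  have hcop : Nat.Coprime (2 * q) (q - 1) := by
    have hodd : Odd (q - 1) := Nat.Even.sub_odd (by omega) hq odd_one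
    exact Nat.Coprime.mul_left (Nat.coprime_two_left.mpr hodd)
      ((Nat.coprime_self_sub_right (by omega)).mpr (Nat.coprime_one_right q))
  refine hcop.dvd_of_dvd_mul_left (Nat.dvd_of_mul_dvd_mul_left two_pos ?_)
  rw [show 2 * (2 * q) = 4 * q by ring, show 2 * ((q - 1) * k) = (2 * q - 2) * k by
    rw [← mul_assoc, Nat.mul_sub, mul_one]]
  exact h

theorem pow_two_mul_mem_center {q : ℕ} (hq0 : q ≠ 0) (hgen : Subgroup.closure {r, s} = ⊤)
    (hs : s * s = 1) (hrs : s * r * s = r ^ (2 * q - 1)) (hz2 : (r ^ (2 * q)) ^ 2 = 1) :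
    r ^ (2 * q) ∈ Subgroup.center G := by
  have hsz : s * r ^ (2 * q) * s = r ^ (2 * q) := by
    rw [mul_pow_mul_of_mul_self_eq_one hs, hrs, pow_right_comm,
      show 2 * q - 1 = 2 * (q - 1) + 1 by omega, pow_succ, pow_mul, hz2, one_pow, one_mul]
  refine Subgroup.mem_center_iff.mpr fun g => Subgroup.mem_centralizer_singleton_iff.mp ?_
  refine (hgen ▸ (Subgroup.closure_le _).mpr ?_) (Subgroup.mem_top g)
  rintro x (rfl | rfl) <;> rw [SetLike.mem_coe, Subgroup.mem_centralizer_singleton_iff]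
  · exact (pow_mul_comm' x _).symm
  · nth_rewrite 2 [← hsz]
    rw [mul_assoc (x * _), hs, mul_one]

theorem mem_center_iff_of_orderOf_eq {q : ℕ} (hq : Even q) (hq0 : q ≠ 0)
    (hgen : Subgroup.closure {r, s} = ⊤) (hnf : ∀ g : G, ∃ k : ℕ, g = r ^ k ∨ g = r ^ k * s)
    (hord : orderOf r = 4 * q) (hs : s * s = 1) (hrs : s * r * s = r ^ (2 * q - 1)) (x : G) :
    x ∈ Subgroup.center G ↔ x = 1 ∨ x = r ^ (2 * q) := by
  have hq2 : 2 ≤ q := by obtain ⟨t, rfl⟩ := hq; omega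
  have hz2 : (r ^ (2 * q)) ^ 2 = 1 := by
    rw [← pow_mul, ← pow_orderOf_eq_one r, hord]; ring_nf
  refine ⟨fun hx => ?_, ?_⟩
  · obtain ⟨k, rfl | rfl⟩ := hnf x
    · have hk : s * r ^ k * s = r ^ k := by
        rw [Subgroup.mem_center_iff.mp hx s, mul_assoc, hs, mul_one]
      rw [mul_pow_mul_of_mul_self_eq_one hs, hrs, ← pow_mul, pow_eq_pow_iff_modEq, hord] at hk
      have hdvd := (Nat.modEq_iff_dvd' (Nat.le_mul_of_pos_left k (by omega))).mp hk.symm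
      rw [← Nat.sub_one_mul, show 2 * q - 1 - 1 = 2 * q - 2 by omega] at hdvd
      obtain ⟨j, rfl⟩ := two_mul_dvd_of_four_mul_dvd hq hq0 hdvd
      rw [pow_mul r (2 * q)]
      rcases Nat.even_or_odd' j with ⟨i, rfl | rfl⟩
      · exact .inl (by rw [pow_mul, hz2, one_pow])
      · exact .inr (by rw [pow_succ, pow_mul, hz2, one_pow, one_mul])
    · have hcomm : r * s = s * r := by
        have h := Subgroup.mem_center_iff.mp hx r
        rw [← mul_assoc, ← pow_succ', pow_succ, mul_assoc, mul_assoc] at h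
        exact mul_left_cancel h
      have h1 : r ^ (2 * q - 2) = 1 := mul_right_cancel (b := r) <| by
        rw [← pow_succ, show 2 * q - 2 + 1 = 2 * q - 1 by omega, ← hrs, ← hcomm, mul_assoc, hs,
          mul_one, one_mul]
      have := Nat.le_of_dvd (by omega) (hord ▸ orderOf_dvd_of_pow_eq_one h1)
      omega
  · rintro (rfl | rfl)
    exacts [Subgroup.one_mem _, pow_two_mul_mem_center hq0 hgen hs hrs hz2]

end Semidihedral

section OrderTwo

variable {H k : Type} [Group H] [CommRing k] [IsDomain k] {z : H}

theorem mul_self_eq_one_of_forall_eq_one_or_eq (hH : ∀ x : H, x = 1 ∨ x = z) (hz : z ≠ 1) :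
    z * z = 1 :=
  (hH _).resolve_right fun h => hz (mul_eq_left.mp h)

theorem MonoidHom.apply_eq_neg_one_of_ne_one (hH : ∀ x : H, x = 1 ∨ x = z) (hz : z ≠ 1)
    {φ : H →* k} (hφ : φ ≠ 1) : φ z = -1 := by
  have hφz : φ z ≠ 1 := fun h => hφ <| MonoidHom.ext fun x => by
    rcases hH x with rfl | rfl
    exacts [map_one φ, h]
  have hzz := mul_self_eq_one_of_forall_eq_one_or_eq hH hz
  exact (mul_self_eq_one_iff.mp (by rw [← map_mul, hzz, map_one])).resolve_left hφz

theorem existsUnique_monoidHom_ne_one (hk : ringChar k ≠ 2) (hH : ∀ x : H, x = 1 ∨ x = z)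
    (hz : z ≠ 1) : ∃! φ : H →* k, φ ≠ 1 := by
  classical
  have hk' : (-1 : k) ≠ 1 := Ring.neg_one_ne_one_of_char_ne_two hk
  have hzz := mul_self_eq_one_of_forall_eq_one_or_eq hH hz
  let φ₀ : H →* k :=
    { toFun := fun x => if x = 1 then 1 else -1
      map_one' := if_pos rfl
      map_mul' := fun x y => by
        rcases hH x with rfl | rfl <;> rcases hH y with rfl | rfl <;> simp [hz, hzz] }
  have hφ₀ : φ₀ ≠ 1 := fun h => hk' <| by simpa [φ₀, hz] using DFunLike.congr_fun h z
  refine ⟨φ₀, hφ₀, fun φ hφ => MonoidHom.ext fun x => ?_⟩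
  rcases hH x with rfl | rfl
  · simp
  · rw [φ.apply_eq_neg_one_of_ne_one hH hz hφ, φ₀.apply_eq_neg_one_of_ne_one hH hz hφ₀]

end OrderTwo

/-- for the semidihedral group G of order 2^n (n ≥ 4), the center N = Z(G) has a
unique nontrivial irreducible complex character φ, but no irreducible complex representation of
G lying over φ has a real-valued (self-dual) character. -/
theorem stmt_17 {G : Type} [Group G] [Fintype G] (n : ℕ) (hn : 4 ≤ n)
    (r s : G) (hr : r ^ (2 ^ (n - 1)) = 1) (hs : s ^ 2 = 1)
    (hrs : s * r * s = r ^ (2 ^ (n - 2) - 1))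
    (hgen : Subgroup.closure {r, s} = ⊤) (hcard : Fintype.card G = 2 ^ n) :
    (∃! φ : ↥(Subgroup.center G) →* ℂ, φ ≠ 1) ∧
    ∀ φ : ↥(Subgroup.center G) →* ℂ, φ ≠ 1 →
      ∀ (V : Type) [AddCommGroup V] [Module ℂ V] (ρ : Representation ℂ G V),
        FiniteDimensional ℂ V → IsIrred ρ →
        (∃ v : V, v ≠ 0 ∧ ∀ z : ↥(Subgroup.center G), ρ (z : G) v = φ z • v) →
        ¬ (∀ g : G, LinearMap.trace ℂ V (ρ g⁻¹) = LinearMap.trace ℂ V (ρ g)) := by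
  obtain ⟨q, hq, hq0, hr, hrs, hcard⟩ : ∃ q : ℕ, Even q ∧ q ≠ 0 ∧ r ^ (4 * q) = 1 ∧
      s * r * s = r ^ (2 * q - 1) ∧ Fintype.card G = 2 * (4 * q) := by
    obtain ⟨b, rfl⟩ : ∃ b, n = b + 4 := ⟨n - 4, by omega⟩
    refine ⟨2 ^ (b + 1), (Nat.even_pow' (by omega)).mpr even_two, by positivity, ?_, ?_, ?_⟩
    · rwa [show 4 * 2 ^ (b + 1) = 2 ^ (b + 4 - 1) by rw [show b + 4 - 1 = b + 1 + 2 by omega]; ring]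
    · rwa [show 2 * 2 ^ (b + 1) = 2 ^ (b + 4 - 2) by rw [show b + 4 - 2 = b + 1 + 1 by omega]; ring]
    · rw [hcard]; ring
  have hs : s * s = 1 := by rwa [← sq]
  have hnf := exists_eq_pow_or_eq_pow_mul hgen hs hrs
  have hord := orderOf_eq_of_card_eq hnf hr hcard
  have hcenter := mem_center_iff_of_orderOf_eq hq hq0 hgen hnf hord hs hrs
  set z := r ^ (2 * q)
  have hz : z ≠ 1 := fun h => by
    have := Nat.le_of_dvd (by positivity) (hord ▸ orderOf_dvd_of_pow_eq_one h)
    omega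
  let zc : Subgroup.center G := ⟨z, (hcenter z).mpr (.inr rfl)⟩
  have hH : ∀ x : Subgroup.center G, x = 1 ∨ x = zc := fun x =>
    ((hcenter x).mp x.2).imp Subtype.ext Subtype.ext
  have hzc : zc ≠ 1 := fun h => hz (congrArg Subtype.val h)
  have hℂ : ringChar ℂ ≠ 2 := by rw [ringChar.eq_zero]; norm_num
  refine ⟨existsUnique_monoidHom_ne_one hℂ hH hzc, ?_⟩
  rintro φ hφ V _ _ ρ _ hρ ⟨v₀, hv₀, hφv₀⟩ hreal
  have hρz (v : V) : ρ z v = -v := by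
    have := hρ.apply_eq_smul_of_mem_center zc.2 hv₀ (hφv₀ zc) v
    rwa [φ.apply_eq_neg_one_of_ne_one hH hzc hφ, neg_one_smul] at this
  have := hρ.isIrreducible
  have : Invertible (Nat.card G : ℂ) := invertibleOfNonzero (by simp)
  obtain ⟨f, hf⟩ := exists_injective_intertwiningMap_dual hreal
  exact hρ.not_injective_intertwiningMap_dual hℂ hgen hs q
    (by rw [hrs, ← pow_sub_one_mul (n := 2 * q) (by omega) r, mul_inv_cancel_right]) hρz f hf
end

section
/- Let G be a finite group, N a normal subgroup, F a field of characteristic 2 that is a splitting field, and V an irreducible FG-module affording a non-degenerate G-invariant bilinear form B. If W is an irreducible FN-submodule of V↓_N occurring with multiplicity 1 in V↓_N and W is self-dual as FN-module, then the restriction of B to W × W is non-degenerate. -/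
open Module

/-!
The radical of `B` on `W` is an `FN`-submodule of the irreducible `W`, so it is `0` or `W`.
If it were `W`, then `v ↦ B v ·` restricted to `W`, followed by a self-duality `W* ≅ W`, would be
a surjective `FN`-map `u : V → W` vanishing on `W`. For `g ∈ G`, `w ↦ g⁻¹ • u (g • w)` is an
`FN`-map `W → V` because `N` is normal, so by multiplicity one it is `c • w` for a scalar `c`.
Then `x := u (g • w) = c • g • w` lies in `W`, so `c • x = u x = 0`, and `x = 0` in either case.
Thus `u` vanishes on every translate `g • W`; these span the irreducible `V`, so `u = 0`,
contradicting surjectivity.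
-/

section Restriction

variable {F : Type} [Field F] {H : Type} [Group H] {V : Type} [AddCommGroup V] [Module F V]
  {τ : Representation F H V} {W : Submodule F V} {σ : Representation F H W}

theorem BilinInvariant.apply_left {B : V →ₗ[F] V →ₗ[F] F} (hB : BilinInvariant τ B) (h : H)
    (v w : V) : B (τ h v) w = B v (τ h⁻¹ w) := by
  conv_lhs => rw [← τ.self_inv_apply h w]
  exact hB h v _

theorem subtype_mem_equivHom (hcompat : ∀ (h : H) (w : W), (σ h w : V) = τ h w) :
    W.subtype ∈ EquivHom σ τ :=
  fun h w => hcompat h w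

theorem isSubrep_ker_compl₁₂ {B : V →ₗ[F] V →ₗ[F] F} (hB : BilinInvariant τ B)
    (hcompat : ∀ (h : H) (w : W), (σ h w : V) = τ h w) :
    IsSubrep σ (LinearMap.ker (B.compl₁₂ W.subtype W.subtype)) := by
  intro h a ha
  rw [LinearMap.mem_ker] at ha ⊢
  ext b
  simpa [hcompat, hB.apply_left] using LinearMap.congr_fun ha (σ h⁻¹ b)

theorem dualMap_subtype_comp_mem_equivHom {B : V →ₗ[F] V →ₗ[F] F} (hB : BilinInvariant τ B)
    (hcompat : ∀ (h : H) (w : W), (σ h w : V) = τ h w) :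
    W.subtype.dualMap ∘ₗ B ∈ EquivHom τ σ.dual := by
  intro h v
  ext w
  simp [Representation.dual_apply, Module.Dual.transpose_apply, hcompat, hB.apply_left]

theorem LinearEquiv.symm_comp_mem_equivHom {M : Type} [AddCommGroup M] [Module F M]
    {π : Representation F H M} {e : W ≃ₗ[F] M} (he : e.toLinearMap ∈ EquivHom σ π)
    {f : V →ₗ[F] M} (hf : f ∈ EquivHom τ π) : e.symm.toLinearMap ∘ₗ f ∈ EquivHom τ σ := by
  intro h v
  apply e.injective
  simp only [LinearMap.comp_apply, LinearEquiv.coe_coe, LinearEquiv.apply_symm_apply]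
  rw [hf h v, ← LinearEquiv.coe_coe, he h, LinearEquiv.coe_coe, LinearEquiv.apply_symm_apply]

theorem exists_surjective_mem_equivHom_of_isSelfDual [FiniteDimensional F V]
    {B : V →ₗ[F] V →ₗ[F] F} (hB : BilinInvariant τ B) (hBnd : Nondeg B)
    (hcompat : ∀ (h : H) (w : W), (σ h w : V) = τ h w) (hsd : IsSelfDual σ) :
    ∃ u ∈ EquivHom τ σ, Function.Surjective u ∧ ∀ v, (∀ w ∈ W, B v w = 0) → u v = 0 := by
  obtain ⟨e, he⟩ := hsd
  have hBsurj : Function.Surjective B :=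
    (LinearMap.injective_iff_surjective_of_finrank_eq_finrank Subspace.dual_finrank_eq.symm).mp
      (LinearMap.ker_eq_bot.mp (LinearMap.separatingLeft_iff_ker_eq_bot.mp hBnd))
  refine ⟨e.symm.toLinearMap ∘ₗ W.subtype.dualMap ∘ₗ B,
    LinearEquiv.symm_comp_mem_equivHom he (dualMap_subtype_comp_mem_equivHom hB hcompat),
    e.symm.surjective.comp ((LinearMap.dualMap_surjective_of_injective W.injective_subtype).comp
      hBsurj), fun v hv => ?_⟩
  have : W.subtype.dualMap (B v) = 0 := LinearMap.ext fun w => hv w w.2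
  simp [this]

theorem exists_smul_eq_of_repMult_eq_one (hmult : repMult σ τ = 1) {f₀ f : W →ₗ[F] V}
    (hf₀ : f₀ ∈ EquivHom σ τ) (hne : f₀ ≠ 0) (hf : f ∈ EquivHom σ τ) : ∃ c : F, c • f₀ = f := by
  obtain ⟨c, hc⟩ := (finrank_eq_one_iff_of_nonzero' (⟨f₀, hf₀⟩ : EquivHom σ τ)
    (by simpa using hne)).mp hmult ⟨f, hf⟩
  exact ⟨c, congrArg Subtype.val hc⟩

end Restriction

section NormalSubgroup

variable {F : Type} [Field F] {G : Type} [Group G] {V : Type} [AddCommGroup V] [Module F V]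
  {ρ : Representation F G V}

theorem IsIrred.eq_zero_of_apply_translate_eq_zero (hρ : IsIrred ρ) {U : Submodule F V}
    (hU : U ≠ ⊥) {M : Type} [AddCommGroup M] [Module F M] {u : V →ₗ[F] M}
    (hu : ∀ (g : G), ∀ v ∈ U, u (ρ g v) = 0) : u = 0 := by
  let K : Submodule F V := ⨅ g, (LinearMap.ker u).comap (ρ g)
  have hK : IsSubrep ρ K := by
    intro h v hv
    simp only [K, Submodule.mem_iInf, Submodule.mem_comap, LinearMap.mem_ker] at hv ⊢
    intro g
    simpa [map_mul] using hv (g * h)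
  have hUK : U ≤ K := by
    intro v hv
    simpa [K, Submodule.mem_iInf] using fun g => hu g v hv
  rcases hρ.2 K hK with hbot | htop
  · exact absurd (eq_bot_iff.mpr (hbot ▸ hUK)) hU
  · ext v
    have : v ∈ K := htop ▸ Submodule.mem_top
    simpa [K] using (Submodule.mem_iInf _).mp this 1

theorem apply_translate_eq_zero_of_repMult_eq_one {N : Subgroup G} [N.Normal] {W : Submodule F V}
    {σ : Representation F N W} [Nontrivial W]
    (hcompat : ∀ (m : N) (w : W), (σ m w : V) = ρ m w) (hmult : repMult σ (ρ.comp N.subtype) = 1)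
    {u : V →ₗ[F] W} (hu : u ∈ EquivHom (ρ.comp N.subtype) σ) (huW : ∀ w : W, u w = 0)
    (g : G) (w : W) : u (ρ g w) = 0 := by
  have hj : ρ g⁻¹ ∘ₗ W.subtype ∘ₗ u ∘ₗ ρ g ∘ₗ W.subtype ∈ EquivHom σ (ρ.comp N.subtype) := by
    intro n b
    have hconj := hu ⟨g * n * g⁻¹, Subgroup.Normal.conj_mem ‹_› _ n.2 g⟩ (ρ g b)
    simp only [MonoidHom.coe_comp, Function.comp_apply, Subgroup.subtype_apply, map_mul,
      Module.End.mul_apply, Representation.inv_self_apply] at hconj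
    simp [hconj, hcompat, map_mul, Module.End.mul_apply]
  have hne : W.subtype ≠ 0 := by
    obtain ⟨w, hw⟩ := exists_ne (0 : W)
    exact fun h => hw (Subtype.ext (LinearMap.congr_fun h w))
  obtain ⟨c, hc⟩ := exists_smul_eq_of_repMult_eq_one hmult (subtype_mem_equivHom hcompat) hne hj
  have hx : (u (ρ g w) : V) = c • ρ g w := by
    simpa using ρ.inv_apply_eq_iff.mp (LinearMap.congr_fun hc w).symm
  have hcx : c • u (ρ g w) = 0 := by rw [← map_smul, ← hx, huW]
  rcases smul_eq_zero.mp hcx with rfl | h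
  · exact Subtype.ext (by simpa using hx)
  · exact h

end NormalSubgroup

theorem stmt_19_general {F : Type} [Field F] {G : Type} [Group G]
    (N : Subgroup G) [N.Normal]
    {V : Type} [AddCommGroup V] [Module F V] [FiniteDimensional F V]
    (ρ : Representation F G V) (hirrV : IsIrred ρ)
    (B : V →ₗ[F] V →ₗ[F] F) (hBinv : BilinInvariant ρ B) (hBnd : Nondeg B)
    (W : Submodule F V) (σ : Representation F ↥N ↥W)
    (hcompat : ∀ (m : ↥N) (w : ↥W), (σ m w : V) = ρ (m : G) (w : V))
    (hirrW : IsIrred σ) (hsdW : IsSelfDual σ)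
    (hmult : repMult σ (ρ.comp N.subtype) = 1) :
    ∀ v ∈ W, (∀ w ∈ W, B v w = 0) → v = 0 := by
  obtain ⟨hWnt, hWirr⟩ := hirrW
  have hBinvN : BilinInvariant (ρ.comp N.subtype) B := fun m => hBinv m
  rcases hWirr _ (isSubrep_ker_compl₁₂ hBinvN hcompat) with hrad | hrad
  · intro v hv hvW
    have hker : (⟨v, hv⟩ : W) ∈ LinearMap.ker (B.compl₁₂ W.subtype W.subtype) :=
      LinearMap.ext fun w => hvW w w.2
    rw [hrad, Submodule.mem_bot] at hker
    exact congrArg Subtype.val hker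
  · obtain ⟨u, hu, hsurj, hker⟩ :=
      exists_surjective_mem_equivHom_of_isSelfDual hBinvN hBnd hcompat hsdW
    have huW (w : W) : u w = 0 := hker w fun w' hw' =>
      LinearMap.congr_fun (hrad ▸ Submodule.mem_top : w ∈ LinearMap.ker _) ⟨w', hw'⟩
    have hu0 : u = 0 := hirrV.eq_zero_of_apply_translate_eq_zero
      (Submodule.nontrivial_iff_ne_bot.mp hWnt)
      fun g v hv => apply_translate_eq_zero_of_repMult_eq_one hcompat hmult hu huW g ⟨v, hv⟩
    obtain ⟨w, hw⟩ := exists_ne (0 : W)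
    obtain ⟨v, rfl⟩ := hsurj w
    exact (hw (LinearMap.congr_fun hu0 v)).elim

/-- if W is a self-dual irreducible FN-submodule of multiplicity 1 in V↓N, and B
is a non-degenerate G-invariant bilinear form on the irreducible module V, then B restricted to
W is non-degenerate. -/
theorem stmt_19 {F : Type} [Field F] [CharP F 2] {G : Type} [Group G] [Finite G]
    (N : Subgroup G) [N.Normal]
    (hsplit : ∀ H : Subgroup G, IsSplitting F ↥H)
    {V : Type} [AddCommGroup V] [Module F V] [FiniteDimensional F V]
    (ρ : Representation F G V) (hirrV : IsIrred ρ)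
    (B : V →ₗ[F] V →ₗ[F] F) (hBinv : BilinInvariant ρ B) (hBnd : Nondeg B)
    (W : Submodule F V) (σ : Representation F ↥N ↥W)
    (hcompat : ∀ (m : ↥N) (w : ↥W), (σ m w : V) = ρ (m : G) (w : V))
    (hirrW : IsIrred σ) (hsdW : IsSelfDual σ)
    (hmult : repMult σ (ρ.comp N.subtype) = 1) :
    ∀ v ∈ W, (∀ w ∈ W, B v w = 0) → v = 0 :=
  stmt_19_general N ρ hirrV B hBinv hBnd W σ hcompat hirrW hsdW hmult
end
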